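/- arXiv:1609.07339 — 6 statements merged into one kernel-verified Lean document; each statement's English description precedes it below -/
import Mathlib

section
/- Let κ > 0, h > 0, let X be a random variable, and let q ∈ 𝒬(κ,h) be continuous and not identically zero. Assume that for every x > 0, lim_{n→∞} x^κ e^{κnh} P(X > x e^{nh}) = q(x). Then P(X > x) ∼ q(x) x^{−κ} as x → ∞, i.e. lim_{x→∞} x^κ P(X > x)/q(x) = 1. -/
open MeasureTheory ProbabilityTheory Filter Topology

noncomputable section

/-- `q ∈ 𝒬(κ,h)`: `q : (0,∞) → [0,∞)`, `x ↦ x^{-κ} q(x)` is nonincreasing on `(0,∞)`,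
and `q(x e^h) = q(x)` for all `x > 0`. -/
def MemQ (κ h : ℝ) (q : ℝ → ℝ) : Prop :=
  (∀ x : ℝ, 0 < x → 0 ≤ q x) ∧
  AntitoneOn (fun x : ℝ => x ^ (-κ) * q x) (Set.Ioi (0 : ℝ)) ∧
  (∀ x : ℝ, 0 < x → q (x * Real.exp h) = q x)


lemma key_unif {a : ℝ} (ha : 1 < a) (f : ℝ → ℝ) (H : ℕ → ℝ → ℝ)
    (hf : ContinuousOn f (Set.Icc 1 a))
    (hH : ∀ n, AntitoneOn (H n) (Set.Icc 1 a))
    (hlim : ∀ y ∈ Set.Icc (1:ℝ) a, Tendsto (fun n => H n y) atTop (𝓝 (f y)))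
    (δ : ℝ) (hδ : 0 < δ) :
    ∀ᶠ n in atTop, ∀ y ∈ Set.Icc (1:ℝ) a, |H n y - f y| ≤ δ := by
  have huc := isCompact_Icc.uniformContinuousOn_of_continuous hf
  rw [Metric.uniformContinuousOn_iff] at huc
  obtain ⟨η, hη, hucη⟩ := huc (δ/3) (by linarith)
  obtain ⟨k, hk⟩ := exists_nat_gt ((a-1)/η)
  have ha1 : (0:ℝ) < a - 1 := by linarith
  have hk0 : (0:ℝ) < k := lt_trans (div_pos ha1 hη) hk
  have hkn0 : k ≠ 0 := by exact_mod_cast hk0.ne'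
  have hgapη : (a-1)/k < η := by
    rw [div_lt_iff₀ hk0]
    rw [div_lt_iff₀ hη] at hk
    linarith [hk]
  set g : ℕ → ℝ := fun i => 1 + i * ((a-1)/k) with hg_def
  clear_value g
  have hgmem : ∀ i : ℕ, i ≤ k → g i ∈ Set.Icc (1:ℝ) a := by
    intro i hi
    constructor
    · have : (0:ℝ) ≤ i * ((a-1)/k) := by positivity
      simp only [hg_def]; linarith
    · have : (i:ℝ) * ((a-1)/k) ≤ k * ((a-1)/k) := by
        apply mul_le_mul_of_nonneg_right (by exact_mod_cast hi) (by positivity)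
      have hka : (k:ℝ) * ((a-1)/k) = a - 1 := by field_simp
      simp only [hg_def]; linarith
  have hev : ∀ᶠ n in atTop, ∀ i ∈ Finset.range (k+1), |H n (g i) - f (g i)| < δ/3 := by
    rw [Filter.eventually_all_finset]
    intro i hi
    have hi' : i ≤ k := Nat.lt_succ_iff.mp (Finset.mem_range.mp hi)
    have := hlim (g i) (hgmem i hi')
    have := Metric.tendsto_nhds.mp this (δ/3) (by linarith)
    simpa [Real.dist_eq] using this
  filter_upwards [hev] with n hn y hy
  set t := (y - 1) * k / (a - 1) with ht_def
  clear_value t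
  have ht0 : 0 ≤ t := by
    rw [ht_def]
    apply div_nonneg _ (le_of_lt ha1)
    have : (0:ℝ) ≤ y - 1 := by linarith [hy.1]
    positivity
  set i := min ⌊t⌋₊ (k-1) with hi_def
  clear_value i
  have hik : i + 1 ≤ k := by
    have : i ≤ k - 1 := by rw [hi_def]; exact min_le_right _ _
    omega
  have hit : (i:ℝ) ≤ t := by
    calc (i:ℝ) ≤ ⌊t⌋₊ := by rw [hi_def]; exact_mod_cast min_le_left _ _
    _ ≤ t := Nat.floor_le ht0
  have hty : 1 + t * ((a-1)/k) = y := by rw [ht_def]; field_simp; ring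
  have h1 : g i ≤ y := by
    rw [← hty]
    simp only [hg_def]
    have := mul_le_mul_of_nonneg_right hit (le_of_lt (by positivity : (0:ℝ) < (a-1)/k))
    linarith
  have h2 : y ≤ g (i+1) := by
    rcases le_or_gt ⌊t⌋₊ (k-1) with hc | hc
    · have hieq : i = ⌊t⌋₊ := by rw [hi_def]; exact min_eq_left hc
      have htlt : t < (i:ℝ) + 1 := by
        rw [hieq]; push_cast; exact Nat.lt_floor_add_one t
      have hmul := mul_le_mul_of_nonneg_right htlt.le (le_of_lt (show (0:ℝ) < (a-1)/k by positivity))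
      simp only [hg_def]
      push_cast
      linarith [hty, hmul]
    · have hieq : i = k - 1 := by rw [hi_def]; exact min_eq_right (by omega)
      have : i + 1 = k := by omega
      rw [this]
      have : g k = a := by
        simp only [hg_def]; field_simp; ring
      rw [this]; exact hy.2
  have hgi : g i ∈ Set.Icc (1:ℝ) a := hgmem i (by omega)
  have hgi1 : g (i+1) ∈ Set.Icc (1:ℝ) a := hgmem (i+1) hik
  have hgap : g (i+1) - g i = (a-1)/k := by
    simp only [hg_def]; push_cast; ring
  have hgapnn : (0:ℝ) < (a-1)/k := by positivity
  have hd1 : |f (g i) - f y| < δ/3 := by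
    have habs : |g i - y| ≤ (a-1)/k := by
      rw [abs_le]
      constructor
      · linarith [h2, hgap]
      · linarith [h1, hgapnn]
    have := hucη (g i) hgi y hy (by rw [Real.dist_eq]; linarith [hgapη, habs])
    simpa [Real.dist_eq] using this
  have hd2 : |f (g (i+1)) - f y| < δ/3 := by
    have habs : |g (i+1) - y| ≤ (a-1)/k := by
      rw [abs_le]
      constructor
      · linarith [h2, hgapnn]
      · linarith [h1, hgap]
    have := hucη (g (i+1)) hgi1 y hy (by rw [Real.dist_eq]; linarith [hgapη, habs])
    simpa [Real.dist_eq] using this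
  have hH1 : H n y ≤ H n (g i) := hH n hgi hy h1
  have hH2 : H n (g (i+1)) ≤ H n y := hH n hy hgi1 h2
  have hb1 : |H n (g i) - f (g i)| < δ/3 := hn i (Finset.mem_range.mpr (by omega))
  have hb2 : |H n (g (i+1)) - f (g (i+1))| < δ/3 := hn (i+1) (Finset.mem_range.mpr (by omega))
  rw [abs_lt] at hb1 hb2 hd1 hd2
  rw [abs_le]
  constructor <;> [linarith [hb2.1, hd2.2, hH2]; linarith [hb1.2, hd1.1, hH1]]

/-- Lemma 1: if `q ∈ 𝒬(κ,h)` is continuous and nonzero and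
`x^κ e^{κnh} P(X > x e^{nh}) → q(x)` for every `x > 0`, then
`P(X > x) ∼ q(x) x^{-κ}` as `x → ∞`. -/
theorem stmt2 {Ω : Type*} [MeasurableSpace Ω] (P : Measure Ω) [IsProbabilityMeasure P]
    (X : Ω → ℝ) (hXmeas : Measurable X)
    (κ h : ℝ) (hκ : 0 < κ) (hh : 0 < h)
    (q : ℝ → ℝ) (hq : MemQ κ h q)
    (hqcont : ContinuousOn q (Set.Ioi (0 : ℝ)))
    (hqne : ∃ x : ℝ, 0 < x ∧ q x ≠ 0)
    (hlim : ∀ x : ℝ, 0 < x →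
      Tendsto (fun n : ℕ =>
          x ^ κ * Real.exp (κ * (n * h)) * (P {ω | X ω > x * Real.exp (n * h)}).toReal)
        atTop (𝓝 (q x))) :
    Tendsto (fun x : ℝ => x ^ κ * (P {ω | X ω > x}).toReal / q x) atTop (𝓝 1) := by
  obtain ⟨hq0, hfant, hqper⟩ := hq
  -- iterated periodicity
  have qper : ∀ x : ℝ, 0 < x → ∀ k : ℕ, q (x * Real.exp (k * h)) = q x := by
    intro x hx k
    induction k with
    | zero => simp
    | succ k ih =>
      have hxk : 0 < x * Real.exp (k * h) := by positivity
      have heq : x * Real.exp ((k+1 : ℕ) * h) = (x * Real.exp (k * h)) * Real.exp h := by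
        rw [mul_assoc, ← Real.exp_add]
        congr 1
        push_cast
        ring
      rw [heq, hqper _ hxk, ih]
  -- positivity of q
  have qpos : ∀ x : ℝ, 0 < x → 0 < q x := by
    obtain ⟨x₀, hx₀, hqx₀⟩ := hqne
    have hqx₀' : 0 < q x₀ := lt_of_le_of_ne (hq0 x₀ hx₀) (Ne.symm hqx₀)
    intro x hx
    obtain ⟨k, hk⟩ := exists_nat_ge (x / (x₀ * h))
    have h1 : x / x₀ ≤ (k:ℝ) * h := by
      have hmul := mul_le_mul_of_nonneg_right hk hh.le
      have heq : x / (x₀ * h) * h = x / x₀ := by field_simp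
      linarith
    have h2 : (k:ℝ) * h ≤ Real.exp ((k:ℝ) * h) := by
      linarith [Real.add_one_le_exp ((k:ℝ) * h)]
    have hxle : x ≤ x₀ * Real.exp ((k:ℝ) * h) := by
      rw [div_le_iff₀ hx₀] at h1
      calc x ≤ (k:ℝ) * h * x₀ := h1
      _ ≤ Real.exp ((k:ℝ) * h) * x₀ := mul_le_mul_of_nonneg_right h2 hx₀.le
      _ = x₀ * Real.exp ((k:ℝ) * h) := mul_comm _ _
    have hc : 0 < x₀ * Real.exp ((k:ℝ) * h) := by positivity
    have hfx := hfant (Set.mem_Ioi.2 hx) (Set.mem_Ioi.2 hc) hxle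
    simp only at hfx
    rw [qper x₀ hx₀ k] at hfx
    have hpos : 0 < x ^ (-κ) * q x :=
      lt_of_lt_of_le (mul_pos (Real.rpow_pos_of_pos hc _) hqx₀') hfx
    have hxpos : 0 < x ^ (-κ) := Real.rpow_pos_of_pos hx _
    by_contra hcon
    push_neg at hcon
    have := mul_nonpos_of_nonneg_of_nonpos hxpos.le hcon
    linarith
  set a := Real.exp h with ha_def
  have ha1 : 1 < a := by
    rw [ha_def, show (1:ℝ) = Real.exp 0 by simp]
    exact Real.exp_lt_exp.2 hh
  set f : ℝ → ℝ := fun y => y ^ (-κ) * q y with hf_def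
  set H : ℕ → ℝ → ℝ :=
    fun n y => Real.exp (κ * (n * h)) * (P {ω | X ω > y * Real.exp (n * h)}).toReal with hH_def
  have hIccIoi : Set.Icc (1:ℝ) a ⊆ Set.Ioi 0 := fun y hy => lt_of_lt_of_le one_pos hy.1
  have hfcont : ContinuousOn f (Set.Icc 1 a) := by
    apply ContinuousOn.mul
    · apply ContinuousOn.rpow_const continuousOn_id
      intro y hy
      exact Or.inl (ne_of_gt (hIccIoi hy))
    · exact hqcont.mono hIccIoi
  have hHant : ∀ n, AntitoneOn (H n) (Set.Icc 1 a) := by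
    intro n u hu v hv huv
    simp only [hH_def]
    apply mul_le_mul_of_nonneg_left _ (Real.exp_nonneg _)
    apply ENNReal.toReal_mono (measure_ne_top P _)
    apply measure_mono
    intro ω hω
    simp only [Set.mem_setOf_eq] at hω ⊢
    have : u * Real.exp (n * h) ≤ v * Real.exp (n * h) :=
      mul_le_mul_of_nonneg_right huv (Real.exp_nonneg _)
    linarith
  have hHlim : ∀ y ∈ Set.Icc (1:ℝ) a, Tendsto (fun n => H n y) atTop (𝓝 (f y)) := by
    intro y hy
    have hy0 : 0 < y := hIccIoi hy
    have h0 := (hlim y hy0).const_mul (y ^ (-κ))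
    have hyy : y ^ (-κ) * y ^ κ = 1 := by
      rw [← Real.rpow_add hy0]
      simp
    refine h0.congr fun n => ?_
    simp only [hH_def]
    rw [show y ^ κ * Real.exp (κ * (↑n * h)) * (P {ω | X ω > y * Real.exp (↑n * h)}).toReal
        = y ^ κ * (Real.exp (κ * (↑n * h)) * (P {ω | X ω > y * Real.exp (↑n * h)}).toReal)
        from mul_assoc _ _ _, ← mul_assoc, hyy, one_mul]
  have hm : 0 < f a := by
    simp only [hf_def]
    exact mul_pos (Real.rpow_pos_of_pos (lt_trans one_pos ha1) _) (qpos a (lt_trans one_pos ha1))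
  have hflb : ∀ y ∈ Set.Icc (1:ℝ) a, f a ≤ f y := by
    intro y hy
    exact hfant (hIccIoi hy) (Set.mem_Ioi.2 (lt_trans one_pos ha1)) hy.2
  rw [Metric.tendsto_nhds]
  intro ε hε
  have hδ : 0 < ε * f a / 2 := by positivity
  obtain ⟨N, hN⟩ := (key_unif ha1 f H hfcont hHant hHlim (ε * f a / 2) hδ).exists_forall_of_atTop
  clear_value a f H
  rw [Filter.eventually_atTop]
  refine ⟨Real.exp (((N:ℝ)+1) * h), fun x hx => ?_⟩
  have hx0 : 0 < x := lt_of_lt_of_le (Real.exp_pos _) hx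
  have hlogx : ((N:ℝ)+1) * h ≤ Real.log x := (Real.le_log_iff_exp_le hx0).2 hx
  have hNh0 : (0:ℝ) ≤ ((N:ℝ)+1) * h := by positivity
  set n := ⌊Real.log x / h⌋₊ with hn_def
  have hlog0 : 0 ≤ Real.log x / h := div_nonneg (le_trans hNh0 hlogx) hh.le
  have hnh : (n:ℝ) * h ≤ Real.log x := by
    have h1 := Nat.floor_le hlog0
    have h2 := mul_le_mul_of_nonneg_right h1 hh.le
    rwa [div_mul_cancel₀ _ hh.ne'] at h2
  have hnh2 : Real.log x < ((n:ℝ)+1) * h := by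
    have h1 := Nat.lt_floor_add_one (Real.log x / h)
    rw [div_lt_iff₀ hh] at h1
    calc Real.log x < (↑⌊Real.log x / h⌋₊ + 1) * h := h1
    _ = ((n:ℝ)+1) * h := by rw [hn_def]
  have hnN : N ≤ n := by
    have h1 : ((N:ℝ)+1) ≤ Real.log x / h := by
      rw [le_div_iff₀ hh]; linarith
    have h2 : (N+1 : ℕ) ≤ n := Nat.le_floor (by push_cast; linarith)
    omega
  set y := x * Real.exp (-((n:ℝ) * h)) with hy_def
  have hy0 : 0 < y := by positivity
  have hxy : x = y * Real.exp ((n:ℝ) * h) := by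
    rw [hy_def, mul_assoc, ← Real.exp_add]; simp
  have hy1 : 1 ≤ y := by
    rw [hy_def]
    have hxe : Real.exp ((n:ℝ)*h) ≤ x := by
      calc Real.exp ((n:ℝ)*h) ≤ Real.exp (Real.log x) := Real.exp_le_exp.2 hnh
      _ = x := Real.exp_log hx0
    calc (1:ℝ) = Real.exp ((n:ℝ)*h) * Real.exp (-((n:ℝ)*h)) := by
          rw [← Real.exp_add]; simp
    _ ≤ x * Real.exp (-((n:ℝ)*h)) := mul_le_mul_of_nonneg_right hxe (Real.exp_nonneg _)
  have hya : y < a := by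
    rw [hy_def, ha_def]
    have hxlt : x < Real.exp (((n:ℝ)+1) * h) := by
      rw [← Real.exp_log hx0]; exact Real.exp_lt_exp.2 hnh2
    calc x * Real.exp (-(↑n*h)) < Real.exp ((↑n+1)*h) * Real.exp (-(↑n*h)) :=
          mul_lt_mul_of_pos_right hxlt (Real.exp_pos _)
    _ = Real.exp h := by rw [← Real.exp_add]; ring_nf
  clear_value n y
  have hymem : y ∈ Set.Icc (1:ℝ) a := ⟨hy1, hya.le⟩
  have hqxy : q x = q y := by rw [hxy]; exact qper y hy0 n
  have hqy : 0 < q y := qpos y hy0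
  have hfy0 : 0 < f y := by
    rw [hf_def]
    exact mul_pos (Real.rpow_pos_of_pos hy0 _) hqy
  have hexpr : x ^ κ * (P {ω | X ω > x}).toReal / q x = H n y / f y := by
    rw [hqxy]
    rw [show ({ω | X ω > x}) = {ω | X ω > y * Real.exp ((n:ℝ) * h)} by rw [hxy]]
    rw [show x ^ κ = y ^ κ * Real.exp (κ * ((n:ℝ) * h)) by
      rw [hxy, Real.mul_rpow hy0.le (Real.exp_nonneg _),
        Real.rpow_def_of_pos (Real.exp_pos _), Real.log_exp]
      ring_nf]
    simp only [hH_def, hf_def]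
    rw [Real.rpow_neg hy0.le]
    have hyκ : y ^ κ ≠ 0 := (Real.rpow_pos_of_pos hy0 κ).ne'
    field_simp
  rw [Real.dist_eq, hexpr]
  have hHf := hN n hnN y hymem
  have hfm : f a ≤ f y := hflb y hymem
  have heq1 : H n y / f y - 1 = (H n y - f y) / f y := by
    field_simp
  rw [heq1, abs_div, abs_of_pos hfy0]
  have h1 : |H n y - f y| / f y ≤ (ε * f a / 2) / f a :=
    div_le_div₀ hδ.le hHf hm hfm
  have heq2 : (ε * f a / 2) / f a = ε / 2 := by
    field_simp
  rw [heq2] at h1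
  linarith
end
end

section
/- Let κ > 0, h > 0, let X be a random variable, and let q ∈ 𝒬(κ,h) be such that lim_{n→∞} x^κ e^{κnh} P(X > x e^{nh}) = q(x) for every continuity point x > 0 of q. Let (x_n) be a sequence tending to infinity such that e^{h·{log(x_n)/h}} → λ ∈ [1, e^h], where {y} denotes the fractional part of y. Then q(λ+) ≤ liminf_{n→∞} x_n^κ P(X > x_n) ≤ limsup_{n→∞} x_n^κ P(X > x_n) ≤ q(λ−), where q(λ±) denote the one-sided limits of q at λ. -/
open MeasureTheory ProbabilityTheory Filter Topology

noncomputable section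

lemma countable_discont {κ : ℝ} {q : ℝ → ℝ}
    (hqanti : AntitoneOn (fun x : ℝ => x ^ (-κ) * q x) (Set.Ioi (0 : ℝ))) :
    Set.Countable {y : ℝ | 0 < y ∧ ¬ContinuousAt q y} := by
  set G : ℝ → ℝ := fun t => Real.exp t ^ (-κ) * q (Real.exp t) with hG
  have hGanti : Antitone G := fun t s hts =>
    hqanti (Set.mem_Ioi.2 (Real.exp_pos t)) (Set.mem_Ioi.2 (Real.exp_pos s))
      (Real.exp_le_exp.2 hts)
  have hsub : {y : ℝ | 0 < y ∧ ¬ContinuousAt q y} ⊆ Real.exp '' {t | ¬ContinuousAt G t} := by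
    rintro y ⟨hy, hyc⟩
    refine ⟨Real.log y, fun hGc => hyc ?_, Real.exp_log hy⟩
    have hc : ContinuousAt (fun z : ℝ => z ^ κ * G (Real.log z)) y :=
      (Real.continuousAt_rpow_const y κ (Or.inl (ne_of_gt hy))).mul
        (hGc.comp (Real.continuousAt_log (ne_of_gt hy)))
    refine hc.congr ?_
    filter_upwards [eventually_gt_nhds hy] with z hz
    simp only [hG, Real.exp_log hz]
    rw [← mul_assoc, ← Real.rpow_add hz, add_neg_cancel, Real.rpow_zero, one_mul]
  exact ((hGanti.countable_not_continuousAt).image _).mono hsub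

/-- Inequality (eq:q-liminfsup): if `x^κ e^{κnh} P(X > x e^{nh}) → q(x)` at continuity
points of `q`, and `(x_n) → ∞` with `e^{h {log(x_n)/h}} → λ ∈ [1, e^h]`, then
`q(λ+) ≤ liminf x_n^κ P(X > x_n) ≤ limsup x_n^κ P(X > x_n) ≤ q(λ−)`, where
`q(λ+)`, `q(λ−)` are the one-sided limits of `q` at `λ`. -/
theorem stmt3 {Ω : Type*} [MeasurableSpace Ω] (P : Measure Ω) [IsProbabilityMeasure P]
    (X : Ω → ℝ) (hXmeas : Measurable X)
    (κ h : ℝ) (hκ : 0 < κ) (hh : 0 < h)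
    (q : ℝ → ℝ) (hq : MemQ κ h q)
    (hlim : ∀ x : ℝ, 0 < x → ContinuousAt q x →
      Tendsto (fun n : ℕ =>
          x ^ κ * Real.exp (κ * (n * h)) * (P {ω | X ω > x * Real.exp (n * h)}).toReal)
        atTop (𝓝 (q x)))
    (x : ℕ → ℝ) (hx : Tendsto x atTop atTop)
    (lam : ℝ) (hlam : lam ∈ Set.Icc 1 (Real.exp h))
    (hfrac : Tendsto (fun n : ℕ => Real.exp (h * Int.fract (Real.log (x n) / h)))
      atTop (𝓝 lam))
    (qplus qminus : ℝ)
    (hqplus : Tendsto q (𝓝[>] lam) (𝓝 qplus))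
    (hqminus : Tendsto q (𝓝[<] lam) (𝓝 qminus)) :
    qplus ≤ liminf (fun n : ℕ => x n ^ κ * (P {ω | X ω > x n}).toReal) atTop ∧
    liminf (fun n : ℕ => x n ^ κ * (P {ω | X ω > x n}).toReal) atTop ≤
      limsup (fun n : ℕ => x n ^ κ * (P {ω | X ω > x n}).toReal) atTop ∧
    limsup (fun n : ℕ => x n ^ κ * (P {ω | X ω > x n}).toReal) atTop ≤ qminus := by
  obtain ⟨hq0, hqanti, hqper⟩ := hq
  have hlampos : (0:ℝ) < lam := lt_of_lt_of_le one_pos hlam.1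
  set f : ℕ → ℝ := fun n => x n ^ κ * (P {ω | X ω > x n}).toReal with hf
  set l : ℕ → ℝ := fun n => Real.log (x n) / h with hl
  set N : ℕ → ℕ := fun n => (⌊l n⌋).toNat with hN
  set lamn : ℕ → ℝ := fun n => Real.exp (h * Int.fract (l n)) with hlamn
  have hlamn_lim : Tendsto lamn atTop (𝓝 lam) := hfrac
  have hlt : Tendsto l atTop atTop :=
    Tendsto.atTop_div_const hh (Real.tendsto_log_atTop.comp hx)
  have hNt : Tendsto N atTop atTop := by
    refine tendsto_atTop_atTop.2 fun b => ?_
    obtain ⟨i, hi⟩ := tendsto_atTop_atTop.1 hlt (b : ℝ)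
    refine ⟨i, fun a ha => ?_⟩
    have h2 : (b : ℤ) ≤ ⌊l a⌋ := Int.le_floor.2 (by exact_mod_cast hi a ha)
    exact (Int.le_toNat (le_trans (Int.natCast_nonneg b) h2)).2 h2
  -- eventual structure
  have hev : ∀ᶠ n in atTop, 1 ≤ x n ∧ x n = lamn n * Real.exp ((N n : ℝ) * h) := by
    filter_upwards [hx.eventually_ge_atTop 1, hlt.eventually_ge_atTop 0] with n hx1 hl0
    refine ⟨hx1, ?_⟩
    have hxpos : 0 < x n := lt_of_lt_of_le one_pos hx1
    have hfl0 : (0:ℤ) ≤ ⌊l n⌋ := Int.le_floor.2 (by exact_mod_cast hl0)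
    have hNn : ((N n : ℝ)) = ((⌊l n⌋ : ℤ) : ℝ) := by
      rw [hN]; exact_mod_cast congrArg (fun z : ℤ => (z : ℝ)) (Int.toNat_of_nonneg hfl0)
    have hxe : x n = Real.exp (h * l n) := by
      rw [hl]
      have : h * (Real.log (x n) / h) = Real.log (x n) := by field_simp
      rw [this, Real.exp_log hxpos]
    rw [hxe, hlamn, ← Real.exp_add]
    congr 1
    rw [hNn, Int.fract]
    ring
  have hf0 : ∀ᶠ n in atTop, 0 ≤ f n := by
    filter_upwards [hev] with n hn
    exact mul_nonneg (Real.rpow_nonneg (by linarith [hn.1]) κ) ENNReal.toReal_nonneg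
  -- key comparison lemma
  have key : ∀ y : ℝ, 0 < y → ContinuousAt q y →
      ∃ g : ℕ → ℝ, Tendsto g atTop (𝓝 ((lam / y) ^ κ * q y)) ∧
        (∀ᶠ n in atTop, 0 ≤ g n) ∧
        (∀ᶠ n in atTop, y ≤ lamn n → f n ≤ g n) ∧
        (∀ᶠ n in atTop, lamn n ≤ y → g n ≤ f n) := by
    intro y hy hyc
    refine ⟨fun n => (lamn n / y) ^ κ *
      (y ^ κ * Real.exp (κ * ((N n : ℝ) * h)) *
        (P {ω | X ω > y * Real.exp ((N n : ℝ) * h)}).toReal), ?_, ?_, ?_, ?_⟩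
    · have h1 : Tendsto (fun n => (lamn n / y) ^ κ) atTop (𝓝 ((lam / y) ^ κ)) :=
        (hlamn_lim.div_const y).rpow_const (Or.inr (le_of_lt hκ))
      exact h1.mul ((hlim y hy hyc).comp hNt)
    · refine Eventually.of_forall fun n => ?_
      exact mul_nonneg (Real.rpow_nonneg (div_nonneg (Real.exp_pos _).le hy.le) κ)
        (mul_nonneg (mul_nonneg (Real.rpow_nonneg hy.le κ) (Real.exp_pos _).le)
          ENNReal.toReal_nonneg)
    · filter_upwards [hev] with n hn hyl
      obtain ⟨hx1, hxeq⟩ := hn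
      have hxpos : (0:ℝ) < x n := lt_of_lt_of_le one_pos hx1
      have hEpos : (0:ℝ) < Real.exp ((N n : ℝ) * h) := Real.exp_pos _
      have hkey : (lamn n / y) ^ κ * (y ^ κ * Real.exp (κ * ((N n : ℝ) * h))) = x n ^ κ := by
        have hyκ : y ^ κ ≠ 0 := (Real.rpow_pos_of_pos hy κ).ne'
        have e1 : Real.exp (κ * ((N n : ℝ) * h)) = Real.exp ((N n : ℝ) * h) ^ κ := by
          rw [mul_comm κ ((N n : ℝ) * h), Real.exp_mul]
        have e2 : x n ^ κ = lamn n ^ κ * Real.exp ((N n : ℝ) * h) ^ κ := by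
          rw [hxeq, Real.mul_rpow (Real.exp_pos _).le hEpos.le]
        have e3 : (lamn n / y) ^ κ = lamn n ^ κ / y ^ κ :=
          Real.div_rpow (le_of_lt (show (0:ℝ) < lamn n from Real.exp_pos _)) hy.le κ
        have habc : ∀ A B C : ℝ, B ≠ 0 → A / B * (B * C) = A * C := by
          intro A B C hB; field_simp
        rw [e1, e2, e3]
        exact habc _ _ _ hyκ
      have hsub : {ω | X ω > x n} ⊆ {ω | X ω > y * Real.exp ((N n : ℝ) * h)} := by
        intro ω hω
        have hle : y * Real.exp ((N n : ℝ) * h) ≤ x n := by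
          rw [hxeq]; exact mul_le_mul_of_nonneg_right hyl hEpos.le
        exact lt_of_le_of_lt hle hω
      have hP : (P {ω | X ω > x n}).toReal ≤
          (P {ω | X ω > y * Real.exp ((N n : ℝ) * h)}).toReal :=
        ENNReal.toReal_mono (measure_ne_top P _) (measure_mono hsub)
      calc f n = x n ^ κ * (P {ω | X ω > x n}).toReal := rfl
        _ ≤ x n ^ κ * (P {ω | X ω > y * Real.exp ((N n : ℝ) * h)}).toReal :=
            mul_le_mul_of_nonneg_left hP (Real.rpow_nonneg hxpos.le κ)
        _ = _ := by rw [← hkey]; ring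
    · filter_upwards [hev] with n hn hyl
      obtain ⟨hx1, hxeq⟩ := hn
      have hxpos : (0:ℝ) < x n := lt_of_lt_of_le one_pos hx1
      have hEpos : (0:ℝ) < Real.exp ((N n : ℝ) * h) := Real.exp_pos _
      have hkey : (lamn n / y) ^ κ * (y ^ κ * Real.exp (κ * ((N n : ℝ) * h))) = x n ^ κ := by
        have hyκ : y ^ κ ≠ 0 := (Real.rpow_pos_of_pos hy κ).ne'
        have e1 : Real.exp (κ * ((N n : ℝ) * h)) = Real.exp ((N n : ℝ) * h) ^ κ := by
          rw [mul_comm κ ((N n : ℝ) * h), Real.exp_mul]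
        have e2 : x n ^ κ = lamn n ^ κ * Real.exp ((N n : ℝ) * h) ^ κ := by
          rw [hxeq, Real.mul_rpow (Real.exp_pos _).le hEpos.le]
        have e3 : (lamn n / y) ^ κ = lamn n ^ κ / y ^ κ :=
          Real.div_rpow (le_of_lt (show (0:ℝ) < lamn n from Real.exp_pos _)) hy.le κ
        have habc : ∀ A B C : ℝ, B ≠ 0 → A / B * (B * C) = A * C := by
          intro A B C hB; field_simp
        rw [e1, e2, e3]
        exact habc _ _ _ hyκ
      have hsub : {ω | X ω > y * Real.exp ((N n : ℝ) * h)} ⊆ {ω | X ω > x n} := by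
        intro ω hω
        have hle : x n ≤ y * Real.exp ((N n : ℝ) * h) := by
          rw [hxeq]; exact mul_le_mul_of_nonneg_right hyl hEpos.le
        exact lt_of_le_of_lt hle hω
      have hP : (P {ω | X ω > y * Real.exp ((N n : ℝ) * h)}).toReal ≤
          (P {ω | X ω > x n}).toReal :=
        ENNReal.toReal_mono (measure_ne_top P _) (measure_mono hsub)
      calc (lamn n / y) ^ κ * (y ^ κ * Real.exp (κ * ((N n : ℝ) * h)) *
              (P {ω | X ω > y * Real.exp ((N n : ℝ) * h)}).toReal)
          = x n ^ κ * (P {ω | X ω > y * Real.exp ((N n : ℝ) * h)}).toReal := by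
            rw [← hkey]; ring
        _ ≤ x n ^ κ * (P {ω | X ω > x n}).toReal :=
            mul_le_mul_of_nonneg_left hP (Real.rpow_nonneg hxpos.le κ)
  -- dense continuity points
  have hD : Set.Countable {y : ℝ | 0 < y ∧ ¬ContinuousAt q y} := countable_discont hqanti
  have hDc : Dense {y : ℝ | 0 < y ∧ ¬ContinuousAt q y}ᶜ := hD.dense_compl ℝ
  set C : Set ℝ := {y | 0 < y ∧ ContinuousAt q y} with hC
  have hIoo : ∀ a b : ℝ, 0 < a → a < b → ((Set.Ioo a b) ∩ C).Nonempty := by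
    intro a b ha hab
    obtain ⟨y, hy1, hy2⟩ := hDc.inter_open_nonempty _ isOpen_Ioo (Set.nonempty_Ioo.2 hab)
    have hypos : 0 < y := lt_trans ha hy1.1
    refine ⟨y, hy1, hypos, ?_⟩
    by_contra hcont
    exact hy2 ⟨hypos, hcont⟩
  have hFmem : ∀ U ∈ 𝓝[<] lam, (U ∩ C).Nonempty := by
    intro U hU
    obtain ⟨a, ha, hsub⟩ := mem_nhdsLT_iff_exists_Ioo_subset.1 hU
    have ha' : max a (lam / 2) < lam := max_lt ha (by linarith)
    obtain ⟨y, hy1, hy2⟩ := hIoo (max a (lam / 2)) lam (lt_of_lt_of_le (by linarith) (le_max_right _ _)) ha'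
    exact ⟨y, hsub ⟨lt_of_le_of_lt (le_max_left _ _) hy1.1, hy1.2⟩, hy2⟩
  have hFm : (𝓝[<] lam ⊓ 𝓟 C).NeBot := inf_principal_neBot_iff.2 hFmem
  have hFp : (𝓝[>] lam ⊓ 𝓟 C).NeBot := by
    refine inf_principal_neBot_iff.2 fun U hU => ?_
    obtain ⟨b, hb, hsub⟩ := mem_nhdsGT_iff_exists_Ioo_subset.1 hU
    obtain ⟨y, hy1, hy2⟩ := hIoo lam b hlampos hb
    exact ⟨y, hsub hy1, hy2⟩
  -- one continuity point below lam, for boundedness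
  obtain ⟨y0, hy0U, hy0C⟩ := Filter.nonempty_of_mem
    (inter_mem (mem_inf_of_left self_mem_nhdsWithin) (mem_inf_of_right (mem_principal_self C))
      : Set.Iio lam ∩ C ∈ 𝓝[<] lam ⊓ 𝓟 C)
  have hbdd_above : IsBoundedUnder (· ≤ ·) atTop f := by
    obtain ⟨g0, hg0t, _, hg0u, _⟩ := key y0 hy0C.1 hy0C.2
    have hle : ∀ᶠ n in atTop, f n ≤ g0 n := by
      filter_upwards [hg0u, hlamn_lim.eventually (eventually_gt_nhds hy0U)] with n h1 h2
      exact h1 (le_of_lt h2)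
    exact (hg0t.isBoundedUnder_le).mono_le hle
  have hbdd_below : IsBoundedUnder (· ≥ ·) atTop f := ⟨0, by simpa [eventually_map] using hf0⟩
  have hone : Tendsto (fun y : ℝ => (lam / y) ^ κ) (𝓝 lam) (𝓝 1) := by
    have hc : ContinuousAt (fun y : ℝ => (lam / y) ^ κ) lam := by
      have hdiv : ContinuousAt (fun y : ℝ => lam / y) lam :=
        continuousAt_const.div continuousAt_id (ne_of_gt hlampos)
      exact (Real.continuousAt_rpow_const _ κ (Or.inr hκ.le)).comp hdiv
    have := hc.tendsto
    rwa [div_self (ne_of_gt hlampos), Real.one_rpow] at this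
  refine ⟨?_, liminf_le_limsup hbdd_above hbdd_below, ?_⟩
  · -- qplus ≤ liminf
    have hφ : Tendsto (fun y => (lam / y) ^ κ * q y) (𝓝[>] lam ⊓ 𝓟 C) (𝓝 qplus) := by
      have h1 : Tendsto (fun y : ℝ => (lam / y) ^ κ) (𝓝[>] lam ⊓ 𝓟 C) (𝓝 1) :=
        hone.mono_left (le_trans inf_le_left nhdsWithin_le_nhds)
      have h2 : Tendsto q (𝓝[>] lam ⊓ 𝓟 C) (𝓝 qplus) := hqplus.mono_left inf_le_left
      simpa using h1.mul h2
    refine le_of_tendsto hφ ?_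
    rw [eventually_inf_principal]
    filter_upwards [self_mem_nhdsWithin] with y hy hyC
    obtain ⟨g, hgt, hg0, _, hgl⟩ := key y hyC.1 hyC.2
    have hle : ∀ᶠ n in atTop, g n ≤ f n := by
      filter_upwards [hgl, hlamn_lim.eventually (eventually_lt_nhds hy)] with n h1 h2
      exact h1 (le_of_lt h2)
    calc (lam / y) ^ κ * q y = liminf g atTop := (hgt.liminf_eq).symm
      _ ≤ liminf f atTop := liminf_le_liminf hle ⟨0, hg0⟩ hbdd_above.isCoboundedUnder_ge
  · -- limsup ≤ qminus
    have hφ : Tendsto (fun y => (lam / y) ^ κ * q y) (𝓝[<] lam ⊓ 𝓟 C) (𝓝 qminus) := by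
      have h1 : Tendsto (fun y : ℝ => (lam / y) ^ κ) (𝓝[<] lam ⊓ 𝓟 C) (𝓝 1) :=
        hone.mono_left (le_trans inf_le_left nhdsWithin_le_nhds)
      have h2 : Tendsto q (𝓝[<] lam ⊓ 𝓟 C) (𝓝 qminus) := hqminus.mono_left inf_le_left
      simpa using h1.mul h2
    refine ge_of_tendsto hφ ?_
    rw [eventually_inf_principal]
    filter_upwards [self_mem_nhdsWithin] with y hy hyC
    obtain ⟨g, hgt, _, hgu, _⟩ := key y hyC.1 hyC.2
    have hle : ∀ᶠ n in atTop, f n ≤ g n := by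
      filter_upwards [hgu, hlamn_lim.eventually (eventually_gt_nhds hy)] with n h1 h2
      exact h1 (le_of_lt h2)
    calc limsup f atTop ≤ limsup g atTop :=
          limsup_le_limsup hle (isCoboundedUnder_le_of_eventually_le _ hf0) hgt.isBoundedUnder_le
      _ = (lam / y) ^ κ * q y := hgt.limsup_eq
end
end

section
/- Let κ > 0, h > 0 and let q ∈ 𝒬(κ,h) be a right-continuous function that is not identically zero. Then there exists a random vector (A,B) such that A satisfies Assumption (A1) with parameters κ and h, E[|B|^κ] < ∞, and the unique solution X (independent of (A,B)) of the maximum equation X =_d max(AX, B) satisfies lim_{n→∞} x^κ e^{κnh} P(X > x e^{nh}) = q(x) for every x > 0. -/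
open MeasureTheory ProbabilityTheory Filter Topology

noncomputable section

/-- The conditional distribution of `log A` given `A ≠ 0` is arithmetic with span `h`:
given `A ≠ 0`, `log A ∈ hℤ` a.s., and `h` is the largest positive number with this property. -/
def CondLogArithSpan {Ω : Type*} [MeasurableSpace Ω] (P : Measure Ω) (A : Ω → ℝ)
    (h : ℝ) : Prop :=
  0 < h ∧
  P {ω | A ω ≠ 0 ∧ ∀ k : ℤ, Real.log (A ω) ≠ (k : ℝ) * h} = 0 ∧
  ∀ h' : ℝ, 0 < h' →
    P {ω | A ω ≠ 0 ∧ ∀ k : ℤ, Real.log (A ω) ≠ (k : ℝ) * h'} = 0 → h' ≤ h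

/-- Assumption (A1): `A ≥ 0` a.s., `E A^κ = 1`, `E[A^κ log₊ A] < ∞`, and `log A`
conditioned on `A ≠ 0` is arithmetic with span `h`. -/
def AssumptionA1 {Ω : Type*} [MeasurableSpace Ω] (P : Measure Ω) (A : Ω → ℝ)
    (κ h : ℝ) : Prop :=
  0 < κ ∧ (∀ᵐ ω ∂P, 0 ≤ A ω) ∧ (∫ ω, A ω ^ κ ∂P) = 1 ∧
  (∫⁻ ω, ENNReal.ofReal (A ω ^ κ * max (Real.log (A ω)) 0) ∂P) < ⊤ ∧
  CondLogArithSpan P A h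

/-- Proposition 1 (maximum part): every right-continuous nonzero `q ∈ 𝒬(κ,h)` arises as
the tail function of the unique solution of a maximum equation `X =_d AX ∨ B` with
`(A,B)` satisfying the conditions of Theorem 3. -/
theorem stmt7 (κ h : ℝ) (hκ : 0 < κ) (hh : 0 < h)
    (q : ℝ → ℝ) (hq : MemQ κ h q)
    (hqrc : ∀ x : ℝ, 0 < x → ContinuousWithinAt q (Set.Ici x) x)
    (hne : ∃ x : ℝ, 0 < x ∧ q x ≠ 0) :
    ∃ (Ω : Type) (_ : MeasurableSpace Ω) (P : Measure Ω) (_ : IsProbabilityMeasure P)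
      (A B X : Ω → ℝ),
      Measurable A ∧ Measurable B ∧ Measurable X ∧
      AssumptionA1 P A κ h ∧
      (∫⁻ ω, ENNReal.ofReal (|B ω| ^ κ) ∂P) < ⊤ ∧
      IndepFun (fun ω => (A ω, B ω)) X P ∧
      Measure.map X P = Measure.map (fun ω => max (A ω * X ω) (B ω)) P ∧
      (∀ x : ℝ, 0 < x →
        Tendsto (fun n : ℕ =>
            x ^ κ * Real.exp (κ * (n * h)) * (P {ω | X ω > x * Real.exp (n * h)}).toReal)
          atTop (𝓝 (q x))) := by
  classical
  obtain ⟨hqpos, hqanti, hqper⟩ := hq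
  obtain ⟨x₀, hx₀, hqx₀⟩ := hne
  set p : ℝ := Real.exp (-(κ * h)) with hp_def
  have hp0 : 0 < p := Real.exp_pos _
  have hp1 : p < 1 := by
    rw [hp_def, Real.exp_lt_one_iff]
    nlinarith
  have h1p : 0 < 1 - p := by linarith
  set f : ℝ → ℝ := fun t => t ^ (-κ) * q t with hf_def
  have hfnn : ∀ t : ℝ, 0 < t → 0 ≤ f t := fun t ht =>
    mul_nonneg (Real.rpow_nonneg ht.le _) (hqpos t ht)
  have hfanti : AntitoneOn f (Set.Ioi 0) := hqanti
  -- periodicity of q along multiples of h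
  have hqper_n : ∀ n : ℕ, ∀ x : ℝ, 0 < x → q (x * Real.exp (n * h)) = q x := by
    intro n
    induction n with
    | zero => intro x hx; simp
    | succ n ih =>
      intro x hx
      have hstep : x * Real.exp (((n : ℕ) + 1 : ℕ) * h)
          = (x * Real.exp (n * h)) * Real.exp h := by
        push_cast
        rw [mul_assoc, ← Real.exp_add]
        ring_nf
      rw [hstep, hqper _ (by positivity), ih x hx]
  -- scaling of f
  have hfscale : ∀ x : ℝ, 0 < x → ∀ n : ℕ, f (x * Real.exp (n * h)) = p ^ n * f x := by
    intro x hx n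
    have hE : (0:ℝ) < Real.exp ((n : ℝ) * h) := Real.exp_pos _
    have h1 : (x * Real.exp ((n : ℝ) * h)) ^ (-κ)
        = x ^ (-κ) * Real.exp ((n : ℝ) * h) ^ (-κ) := Real.mul_rpow hx.le hE.le
    have h2 : Real.exp ((n : ℝ) * h) ^ (-κ) = p ^ n := by
      rw [← Real.exp_mul, hp_def, ← Real.exp_nat_mul]
      congr 1
      ring
    simp only [hf_def]
    rw [hqper_n n x hx, h1, h2]
    ring
  set ea : ℝ := Real.exp h with hea_def
  have hea0 : 0 < ea := Real.exp_pos _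
  have hfdiv : ∀ t : ℝ, 0 < t → f (t / ea) = f t / p := by
    intro t ht
    have hq' : q (t / ea) = q t := by
      have := hqper (t / ea) (by positivity)
      rw [div_mul_cancel₀ _ (ne_of_gt hea0)] at this
      exact this.symm
    have h1 : (t / ea) ^ (-κ) = t ^ (-κ) / ea ^ (-κ) := Real.div_rpow ht.le hea0.le (-κ)
    have h2 : ea ^ (-κ) = p := by
      rw [hea_def, ← Real.exp_mul, hp_def]
      congr 1
      ring
    simp only [hf_def]
    rw [hq', h1, h2]
    ring
  -- the tail function G
  set G : ℝ → ℝ := fun t => if 0 < t then max 0 (1 - f t) else 0 with hG_def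
  have hGpos : ∀ t : ℝ, 0 < t → G t = max 0 (1 - f t) := fun t ht => if_pos ht
  have hGnpos : ∀ t : ℝ, ¬ 0 < t → G t = 0 := fun t ht => if_neg ht
  have hGnn : ∀ t, 0 ≤ G t := by
    intro t
    by_cases ht : 0 < t
    · rw [hGpos t ht]; exact le_max_left _ _
    · rw [hGnpos t ht]
  have hGle1 : ∀ t, G t ≤ 1 := by
    intro t
    by_cases ht : 0 < t
    · rw [hGpos t ht]
      exact max_le zero_le_one (by linarith [hfnn t ht])
    · rw [hGnpos t ht]; linarith
  have hGmono : Monotone G := by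
    intro s t hst
    by_cases hs : 0 < s
    · have ht : 0 < t := lt_of_lt_of_le hs hst
      rw [hGpos s hs, hGpos t ht]
      have := hfanti (Set.mem_Ioi.2 hs) (Set.mem_Ioi.2 ht) hst
      exact max_le_max le_rfl (by linarith)
    · rw [hGnpos s hs]; exact hGnn t
  have hqx₀' : 0 < q x₀ := lt_of_le_of_ne (hqpos x₀ hx₀) (Ne.symm hqx₀)
  have hfx₀ : 0 < f x₀ := mul_pos (Real.rpow_pos_of_pos hx₀ _) hqx₀'
  -- for small t, G t = 0
  obtain ⟨n₀, hn₀⟩ : ∃ n : ℕ, p ^ n ≤ f x₀ := by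
    have := (tendsto_pow_atTop_nhds_zero_of_lt_one hp0.le hp1).eventually_lt_const hfx₀
    exact (this.mono fun n hn => hn.le).exists
  set δ : ℝ := x₀ / Real.exp ((n₀ : ℝ) * h) with hδ_def
  have hδpos : 0 < δ := by
    rw [hδ_def]; positivity
  have hfδ : 1 ≤ f δ := by
    have h1 : f (δ * Real.exp ((n₀ : ℝ) * h)) = p ^ n₀ * f δ := hfscale δ hδpos n₀
    have h2 : δ * Real.exp ((n₀ : ℝ) * h) = x₀ := by
      rw [hδ_def, div_mul_cancel₀ _ (ne_of_gt (Real.exp_pos _))]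
    rw [h2] at h1
    have hpn : 0 < p ^ n₀ := pow_pos hp0 _
    nlinarith [hn₀, h1, hpn]
  have hGδ : ∀ t : ℝ, t ≤ δ → G t = 0 := by
    intro t ht
    by_cases ht0 : 0 < t
    · rw [hGpos t ht0]
      have : f δ ≤ f t := hfanti (Set.mem_Ioi.2 ht0) (Set.mem_Ioi.2 hδpos) ht
      exact max_eq_left (by linarith)
    · exact hGnpos t ht0
  -- right continuity
  have hGrc : ∀ x : ℝ, ContinuousWithinAt G (Set.Ici x) x := by
    intro x
    by_cases hx : 0 < x
    · have hcf : ContinuousWithinAt f (Set.Ici x) x :=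
        ((Real.continuousAt_rpow_const x (-κ) (Or.inl (ne_of_gt hx))).continuousWithinAt).mul
          (hqrc x hx)
      have hcg : ContinuousWithinAt (fun t => max 0 (1 - f t)) (Set.Ici x) x :=
        continuousWithinAt_const.max (continuousWithinAt_const.sub hcf)
      refine hcg.congr_of_eventuallyEq ?_ (hGpos x hx)
      have hmem : Set.Ioi (0:ℝ) ∈ 𝓝[Set.Ici x] x :=
        mem_nhdsWithin_of_mem_nhds (isOpen_Ioi.mem_nhds hx)
      filter_upwards [hmem] with t ht
      exact hGpos t ht
    · have hxδ : x < δ := lt_of_le_of_lt (not_lt.1 hx) hδpos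
      refine continuousWithinAt_const.congr_of_eventuallyEq ?_ (hGδ x hxδ.le)
      have hmem : Set.Iio δ ∈ 𝓝[Set.Ici x] x :=
        mem_nhdsWithin_of_mem_nhds (isOpen_Iio.mem_nhds hxδ)
      filter_upwards [hmem] with t ht
      exact hGδ t ht.le
  set GS : StieltjesFunction ℝ := ⟨G, hGmono, hGrc⟩ with hGS_def
  have hGbot : Tendsto G atBot (𝓝 0) := by
    refine Tendsto.congr' ?_ (tendsto_const_nhds (x := (0:ℝ)))
    filter_upwards [eventually_le_atBot (0:ℝ)] with t ht
    exact (hGnpos t (not_lt.2 ht)).symm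
  have hGbdd : BddAbove (Set.range G) := ⟨1, by rintro _ ⟨t, rfl⟩; exact hGle1 t⟩
  have hGtop : Tendsto G atTop (𝓝 1) := by
    have hsup := tendsto_atTop_ciSup hGmono hGbdd
    have h1le : (1:ℝ) ≤ ⨆ t, G t := by
      have hseq : Tendsto (fun n : ℕ => 1 - p ^ n * f x₀) atTop (𝓝 1) := by
        have h0 := (tendsto_pow_atTop_nhds_zero_of_lt_one hp0.le hp1).mul_const (f x₀)
        simpa using tendsto_const_nhds.sub h0
      refine le_of_tendsto hseq (Eventually.of_forall fun n => ?_)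
      have hxn : 0 < x₀ * Real.exp ((n : ℝ) * h) := by positivity
      calc 1 - p ^ n * f x₀ ≤ G (x₀ * Real.exp ((n : ℝ) * h)) := by
            rw [hGpos _ hxn, hfscale x₀ hx₀ n]
            exact le_max_right _ _
        _ ≤ ⨆ t, G t := le_ciSup hGbdd _
    have hge : (⨆ t, G t) ≤ 1 := ciSup_le hGle1
    have heq : (⨆ t, G t) = 1 := le_antisymm hge h1le
    rwa [heq] at hsup
  -- the function H (cdf of B)
  set H : ℝ → ℝ := fun t => min 1 ((1 - p)⁻¹ * G t) with hH_def
  have hHnn : ∀ t, 0 ≤ H t := fun t =>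
    le_min zero_le_one (mul_nonneg (inv_nonneg.2 h1p.le) (hGnn t))
  have hHmono : Monotone H := fun s t hst =>
    min_le_min le_rfl (mul_le_mul_of_nonneg_left (hGmono hst) (inv_nonneg.2 h1p.le))
  have hHrc : ∀ x : ℝ, ContinuousWithinAt H (Set.Ici x) x := fun x =>
    continuousWithinAt_const.min (continuousWithinAt_const.mul (hGrc x))
  set HS : StieltjesFunction ℝ := ⟨H, hHmono, hHrc⟩ with hHS_def
  have hHbot : Tendsto H atBot (𝓝 0) := by
    have h0 := tendsto_const_nhds (x := (1:ℝ)) (f := (atBot : Filter ℝ))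
    have hmin := h0.min ((hGbot.const_mul ((1 - p)⁻¹)))
    have hv : min (1:ℝ) ((1 - p)⁻¹ * 0) = 0 := by
      rw [mul_zero]; exact min_eq_right zero_le_one
    rwa [hv] at hmin
  have hinv1 : (1:ℝ) ≤ (1 - p)⁻¹ := by
    rw [le_inv_comm₀ one_pos h1p]
    simpa using hp0.le
  have hHtop : Tendsto H atTop (𝓝 1) := by
    have h0 := tendsto_const_nhds (x := (1:ℝ)) (f := (atTop : Filter ℝ))
    have hmin := h0.min ((hGtop.const_mul ((1 - p)⁻¹)))
    have : min (1:ℝ) ((1 - p)⁻¹ * 1) = 1 := by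
      rw [mul_one]
      exact min_eq_left hinv1
    rwa [this] at hmin
  -- the measures
  set μX : Measure ℝ := GS.measure with hμX_def
  set μB : Measure ℝ := HS.measure with hμB_def
  haveI hμXI : IsProbabilityMeasure μX := GS.isProbabilityMeasure hGbot hGtop
  haveI hμBI : IsProbabilityMeasure μB := HS.isProbabilityMeasure hHbot hHtop
  have hμXIic : ∀ t, μX (Set.Iic t) = ENNReal.ofReal (G t) := by
    intro t
    rw [hμX_def, GS.measure_Iic hGbot, sub_zero]
  have hμBIic : ∀ t, μB (Set.Iic t) = ENNReal.ofReal (H t) := by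
    intro t
    rw [hμB_def, HS.measure_Iic hHbot, sub_zero]
  set μA : Measure ℝ := ENNReal.ofReal p • Measure.dirac ea
      + ENNReal.ofReal (1 - p) • Measure.dirac 0 with hμA_def
  haveI hμAI : IsProbabilityMeasure μA := by
    constructor
    rw [hμA_def]
    simp only [Measure.add_apply, Measure.smul_apply, smul_eq_mul, measure_univ, mul_one]
    rw [← ENNReal.ofReal_add hp0.le h1p.le]
    norm_num
  set P : Measure ((ℝ × ℝ) × ℝ) := (μA.prod μB).prod μX with hP_def
  haveI hPI : IsProbabilityMeasure P := by
    rw [hP_def]; infer_instance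
  -- measurability of coordinates
  have hAm : Measurable (fun ω : (ℝ × ℝ) × ℝ => ω.1.1) := measurable_fst.fst
  have hBm : Measurable (fun ω : (ℝ × ℝ) × ℝ => ω.1.2) := measurable_fst.snd
  have hXm : Measurable (fun ω : (ℝ × ℝ) × ℝ => ω.2) := measurable_snd
  -- pushforwards
  have hmapfst : P.map Prod.fst = μA.prod μB := by
    rw [hP_def, Measure.map_fst_prod, measure_univ, one_smul]
  have hmapA : P.map (fun ω : (ℝ × ℝ) × ℝ => ω.1.1) = μA := by
    have he : (fun ω : (ℝ × ℝ) × ℝ => ω.1.1) = (Prod.fst ∘ Prod.fst) := rfl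
    rw [he, ← Measure.map_map measurable_fst measurable_fst, hmapfst,
      Measure.map_fst_prod, measure_univ, one_smul]
  have hmapB : P.map (fun ω : (ℝ × ℝ) × ℝ => ω.1.2) = μB := by
    have he : (fun ω : (ℝ × ℝ) × ℝ => ω.1.2) = (Prod.snd ∘ Prod.fst) := rfl
    rw [he, ← Measure.map_map measurable_snd measurable_fst, hmapfst,
      Measure.map_snd_prod, measure_univ, one_smul]
  have hmapX : P.map (fun ω : (ℝ × ℝ) × ℝ => ω.2) = μX := by
    have he : (fun ω : (ℝ × ℝ) × ℝ => ω.2) = (Prod.snd : (ℝ × ℝ) × ℝ → ℝ) := rfl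
    rw [he, hP_def, Measure.map_snd_prod, measure_univ, one_smul]
  -- the key real-valued fixed point identity
  have keyident : ∀ t : ℝ, G t
      = p * (G (t / ea) * H t) + (1 - p) * ((if 0 ≤ t then (1:ℝ) else 0) * H t) := by
    intro t
    by_cases ht : 0 < t
    · have htd : 0 < t / ea := div_pos ht hea0
      have hHt : H t = min 1 ((1 - p)⁻¹ * max 0 (1 - f t)) := by
        rw [hH_def]
        simp only []
        rw [hGpos t ht]
      rw [hGpos t ht, hGpos _ htd, hfdiv t ht, if_pos ht.le, hHt]
      have hs0 : 0 ≤ f t := hfnn t ht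
      rcases le_or_gt 1 (f t) with h1s | h1s
      · rw [max_eq_left (by linarith : 1 - f t ≤ 0), mul_zero,
          min_eq_right (zero_le_one' ℝ)]
        simp
      rcases le_or_gt p (f t) with hps | hps
      · rw [max_eq_right (by linarith : (0:ℝ) ≤ 1 - f t)]
        have hmax0 : max 0 (1 - f t / p) = 0 := by
          apply max_eq_left
          have : (1:ℝ) ≤ f t / p := (one_le_div hp0).2 hps
          linarith
        have hmin : min 1 ((1 - p)⁻¹ * (1 - f t)) = (1 - p)⁻¹ * (1 - f t) := by
          apply min_eq_right
          rw [inv_mul_le_iff₀ h1p]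
          linarith
        rw [hmax0, hmin]
        field_simp
        ring
      · rw [max_eq_right (by linarith : (0:ℝ) ≤ 1 - f t)]
        have hmax : max 0 (1 - f t / p) = 1 - f t / p := by
          apply max_eq_right
          have : f t / p ≤ 1 := (div_le_one hp0).2 hps.le
          linarith
        have hmin : min 1 ((1 - p)⁻¹ * (1 - f t)) = 1 := by
          apply min_eq_left
          calc (1:ℝ) = (1 - p)⁻¹ * (1 - p) := (inv_mul_cancel₀ h1p.ne').symm
            _ ≤ (1 - p)⁻¹ * (1 - f t) := by
                apply mul_le_mul_of_nonneg_left (by linarith) (inv_nonneg.2 h1p.le)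
        rw [hmax, hmin]
        field_simp
        ring
    · have hGt : G t = 0 := hGnpos t ht
      have hGtd : G (t / ea) = 0 := by
        apply hGnpos
        rw [not_lt]
        exact div_nonpos_of_nonpos_of_nonneg (not_lt.1 ht) hea0.le
      have hHt : H t = 0 := by
        rw [hH_def]
        simp only []
        rw [hGt, mul_zero]
        exact min_eq_right zero_le_one
      rw [hGt, hGtd, hHt]
      simp
  -- A ≥ 0 a.s.
  have hAae : ∀ᵐ ω ∂P, 0 ≤ (fun ω : (ℝ × ℝ) × ℝ => ω.1.1) ω := by
    rw [ae_iff]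
    have hset : {ω : (ℝ × ℝ) × ℝ | ¬ 0 ≤ ω.1.1}
        = (Set.Iio 0 ×ˢ (Set.univ : Set ℝ)) ×ˢ (Set.univ : Set ℝ) := by
      ext ω
      simp [not_le]
    rw [hset, hP_def, Measure.prod_prod, Measure.prod_prod]
    have hA0 : μA (Set.Iio 0) = 0 := by
      rw [hμA_def]
      simp only [Measure.add_apply, Measure.smul_apply, smul_eq_mul]
      rw [Measure.dirac_apply' _ measurableSet_Iio, Measure.dirac_apply' _ measurableSet_Iio,
        Set.indicator_of_notMem (by simp [not_lt, hea0.le]), Set.indicator_of_notMem (by simp)]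
      simp
    rw [hA0]
    simp
  -- E[A^κ] = 1
  have hrpow_meas : ∀ c : ℝ, c ≠ 0 → Measurable (fun x : ℝ => x ^ c) := by
    intro c hc
    have hrw : (fun x : ℝ => x ^ c) = fun x =>
        if x < 0 then Real.exp (Real.log x * c) * Real.cos (c * Real.pi)
        else if x = 0 then 0 else Real.exp (Real.log x * c) := by
      funext x
      rcases lt_trichotomy x 0 with hx | hx | hx
      · rw [if_pos hx, Real.rpow_def_of_neg hx]
      · subst hx
        rw [if_neg (lt_irrefl _), if_pos rfl, Real.zero_rpow hc]
      · rw [if_neg (not_lt.2 hx.le), if_neg hx.ne', Real.rpow_def_of_pos hx]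
    rw [hrw]
    exact Measurable.ite measurableSet_Iio
      (((Real.measurable_log.mul measurable_const).exp).mul measurable_const)
      (Measurable.ite (measurableSet_singleton 0) measurable_const
        ((Real.measurable_log.mul measurable_const).exp))
  have hintA : ∫ ω, (fun ω : (ℝ × ℝ) × ℝ => ω.1.1) ω ^ κ ∂P = 1 := by
    have h1 : ∫ x, x ^ κ ∂μA = ∫ ω, (ω : (ℝ × ℝ) × ℝ).1.1 ^ κ ∂P := by
      rw [← hmapA]
      exact integral_map hAm.aemeasurable (hrpow_meas κ hκ.ne').stronglyMeasurable.aestronglyMeasurable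
    rw [show (∫ ω, (fun ω : (ℝ × ℝ) × ℝ => ω.1.1) ω ^ κ ∂P)
        = ∫ ω, (ω : (ℝ × ℝ) × ℝ).1.1 ^ κ ∂P from rfl, ← h1, hμA_def]
    have hint1 : Integrable (fun x : ℝ => x ^ κ) (ENNReal.ofReal p • Measure.dirac ea) :=
      ((integrable_const (ea ^ κ)).congr (ae_eq_dirac (fun x : ℝ => x ^ κ)).symm).smul_measure
        ENNReal.ofReal_ne_top
    have hint2 : Integrable (fun x : ℝ => x ^ κ)
        (ENNReal.ofReal (1 - p) • Measure.dirac (0:ℝ)) :=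
      ((integrable_const ((0:ℝ) ^ κ)).congr
        (ae_eq_dirac (fun x : ℝ => x ^ κ)).symm).smul_measure ENNReal.ofReal_ne_top
    rw [integral_add_measure hint1 hint2, integral_smul_measure, integral_smul_measure,
      integral_dirac, integral_dirac, ENNReal.toReal_ofReal hp0.le,
      ENNReal.toReal_ofReal h1p.le, Real.zero_rpow hκ.ne']
    simp only [smul_eq_mul, mul_zero, add_zero]
    rw [hea_def, ← Real.exp_mul, hp_def, ← Real.exp_add,
      show -(κ * h) + h * κ = 0 by ring, Real.exp_zero]
  -- E[A^κ log₊ A] < ∞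
  have hlogmeas : Measurable (fun x : ℝ => ENNReal.ofReal (x ^ κ * max (Real.log x) 0)) :=
    ((hrpow_meas κ hκ.ne').mul (Real.measurable_log.max measurable_const)).ennreal_ofReal
  have hlintA : (∫⁻ ω, ENNReal.ofReal ((fun ω : (ℝ × ℝ) × ℝ => ω.1.1) ω ^ κ
      * max (Real.log ((fun ω : (ℝ × ℝ) × ℝ => ω.1.1) ω)) 0) ∂P) < ⊤ := by
    have h1 : (∫⁻ ω, ENNReal.ofReal ((ω : (ℝ × ℝ) × ℝ).1.1 ^ κ
        * max (Real.log (ω : (ℝ × ℝ) × ℝ).1.1) 0) ∂P)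
        = ∫⁻ x, ENNReal.ofReal (x ^ κ * max (Real.log x) 0) ∂μA := by
      rw [← hmapA, lintegral_map hlogmeas hAm]
    rw [show (∫⁻ ω, ENNReal.ofReal ((fun ω : (ℝ × ℝ) × ℝ => ω.1.1) ω ^ κ
        * max (Real.log ((fun ω : (ℝ × ℝ) × ℝ => ω.1.1) ω)) 0) ∂P)
        = ∫⁻ ω, ENNReal.ofReal ((ω : (ℝ × ℝ) × ℝ).1.1 ^ κ
        * max (Real.log (ω : (ℝ × ℝ) × ℝ).1.1) 0) ∂P from rfl, h1, hμA_def,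
      lintegral_add_measure, lintegral_smul_measure, lintegral_smul_measure,
      lintegral_dirac, lintegral_dirac]
    exact ENNReal.add_lt_top.2
      ⟨ENNReal.mul_lt_top ENNReal.ofReal_lt_top ENNReal.ofReal_lt_top,
       ENNReal.mul_lt_top ENNReal.ofReal_lt_top ENNReal.ofReal_lt_top⟩
  -- arithmetic span
  have hSmeas : ∀ c : ℝ, MeasurableSet {x : ℝ | x ≠ 0 ∧ ∀ k : ℤ, Real.log x ≠ (k : ℝ) * c} := by
    intro c
    rw [Set.setOf_and]
    apply MeasurableSet.inter
    · exact (measurableSet_singleton (0:ℝ)).compl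
    · have hrw : {x : ℝ | ∀ k : ℤ, Real.log x ≠ (k : ℝ) * c}
          = ⋂ k : ℤ, (Real.log ⁻¹' {((k : ℝ) * c)})ᶜ := by
        ext y
        simp
      rw [hrw]
      exact MeasurableSet.iInter fun k =>
        (Real.measurable_log (measurableSet_singleton _)).compl
  have hpre : ∀ c : ℝ, P {ω : (ℝ × ℝ) × ℝ | ω.1.1 ≠ 0 ∧ ∀ k : ℤ, Real.log ω.1.1 ≠ (k : ℝ) * c}
      = μA {x : ℝ | x ≠ 0 ∧ ∀ k : ℤ, Real.log x ≠ (k : ℝ) * c} := by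
    intro c
    rw [← hmapA, Measure.map_apply hAm (hSmeas c)]
    rfl
  have hspan : CondLogArithSpan P (fun ω : (ℝ × ℝ) × ℝ => ω.1.1) h := by
    refine ⟨hh, ?_, ?_⟩
    · rw [show {ω : (ℝ × ℝ) × ℝ | (fun ω : (ℝ × ℝ) × ℝ => ω.1.1) ω ≠ 0
          ∧ ∀ k : ℤ, Real.log ((fun ω : (ℝ × ℝ) × ℝ => ω.1.1) ω) ≠ (k : ℝ) * h}
          = {ω : (ℝ × ℝ) × ℝ | ω.1.1 ≠ 0 ∧ ∀ k : ℤ, Real.log ω.1.1 ≠ (k : ℝ) * h} from rfl,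
        hpre h, hμA_def]
      simp only [Measure.add_apply, Measure.smul_apply, smul_eq_mul]
      rw [Measure.dirac_apply' _ (hSmeas h), Measure.dirac_apply' _ (hSmeas h)]
      rw [Set.indicator_of_notMem, Set.indicator_of_notMem]
      · simp
      · rintro ⟨h0, -⟩
        exact h0 rfl
      · rintro ⟨-, hk⟩
        refine hk 1 ?_
        rw [hea_def, Real.log_exp]
        norm_num
    · intro h' hh' hP0
      by_contra hgt
      push_neg at hgt
      rw [show {ω : (ℝ × ℝ) × ℝ | (fun ω : (ℝ × ℝ) × ℝ => ω.1.1) ω ≠ 0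
          ∧ ∀ k : ℤ, Real.log ((fun ω : (ℝ × ℝ) × ℝ => ω.1.1) ω) ≠ (k : ℝ) * h'}
          = {ω : (ℝ × ℝ) × ℝ | ω.1.1 ≠ 0 ∧ ∀ k : ℤ, Real.log ω.1.1 ≠ (k : ℝ) * h'} from rfl,
        hpre h', hμA_def] at hP0
      have hmem : ea ∈ {x : ℝ | x ≠ 0 ∧ ∀ k : ℤ, Real.log x ≠ (k : ℝ) * h'} := by
        constructor
        · exact ne_of_gt hea0
        · intro k hk
          rw [hea_def, Real.log_exp] at hk
          have hkpos : 0 < k := by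
            by_contra hk0
            push_neg at hk0
            have hle : (k : ℝ) * h' ≤ 0 :=
              mul_nonpos_of_nonpos_of_nonneg (by exact_mod_cast hk0) hh'.le
            linarith
          have hk1 : (1 : ℝ) ≤ (k : ℝ) := by exact_mod_cast hkpos
          have : h' ≤ (k : ℝ) * h' := le_mul_of_one_le_left hh'.le hk1
          linarith
      simp only [Measure.add_apply, Measure.smul_apply, smul_eq_mul] at hP0
      rw [Measure.dirac_apply' _ (hSmeas h'), Set.indicator_of_mem hmem] at hP0
      have h2 : ENNReal.ofReal p * 1 = 0 := by
        have := add_eq_zero.1 hP0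
        simpa using this.1
      rw [mul_one, ENNReal.ofReal_eq_zero] at h2
      linarith
  -- B has finite κ-moment
  obtain ⟨n₁, hn₁⟩ : ∃ n : ℕ, p ^ n * f x₀ ≤ p := by
    have hmc : Tendsto (fun n : ℕ => p ^ n * f x₀) atTop (𝓝 0) := by
      simpa using (tendsto_pow_atTop_nhds_zero_of_lt_one hp0.le hp1).mul_const (f x₀)
    exact ((hmc.eventually_lt_const hp0).mono fun n hn => hn.le).exists
  set T : ℝ := x₀ * Real.exp ((n₁ : ℝ) * h) with hT_def
  have hTpos : 0 < T := by rw [hT_def]; positivity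
  have hfT : f T ≤ p := by
    rw [hT_def, hfscale x₀ hx₀ n₁]
    exact hn₁
  have hHT : H T = 1 := by
    have hGT : G T = 1 - f T := by
      rw [hGpos T hTpos]
      exact max_eq_right (by linarith)
    rw [hH_def]
    simp only []
    rw [hGT]
    apply min_eq_left
    calc (1:ℝ) = (1 - p)⁻¹ * (1 - p) := (inv_mul_cancel₀ h1p.ne').symm
      _ ≤ (1 - p)⁻¹ * (1 - f T) := by
          apply mul_le_mul_of_nonneg_left (by linarith) (inv_nonneg.2 h1p.le)
  have hμBIoi : μB (Set.Ioi T) = 0 := by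
    have h1 : μB (Set.Iic T) = 1 := by
      rw [hμBIic, hHT]
      simp
    have hc := measure_compl (measurableSet_Iic (a := T)) (measure_ne_top μB _)
    rw [Set.compl_Iic] at hc
    rw [hc, h1, measure_univ, tsub_self]
  have hμBneg : μB (Set.Iic 0) = 0 := by
    have hH0 : H 0 = 0 := by
      rw [hH_def]
      simp only []
      rw [hGnpos 0 (lt_irrefl 0), mul_zero]
      exact min_eq_right zero_le_one
    rw [hμBIic, hH0, ENNReal.ofReal_zero]
  have hBmom : (∫⁻ ω, ENNReal.ofReal (|(fun ω : (ℝ × ℝ) × ℝ => ω.1.2) ω| ^ κ) ∂P) < ⊤ := by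
    have hgm : Measurable (fun x : ℝ => ENNReal.ofReal (|x| ^ κ)) :=
      ((hrpow_meas κ hκ.ne').comp measurable_abs).ennreal_ofReal
    have h1 : (∫⁻ ω, ENNReal.ofReal (|(ω : (ℝ × ℝ) × ℝ).1.2| ^ κ) ∂P)
        = ∫⁻ x, ENNReal.ofReal (|x| ^ κ) ∂μB := by
      rw [← hmapB, lintegral_map hgm hBm]
    rw [show (∫⁻ ω, ENNReal.ofReal (|(fun ω : (ℝ × ℝ) × ℝ => ω.1.2) ω| ^ κ) ∂P)
        = ∫⁻ ω, ENNReal.ofReal (|(ω : (ℝ × ℝ) × ℝ).1.2| ^ κ) ∂P from rfl, h1]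
    have hae : ∀ᵐ x ∂μB, ENNReal.ofReal (|x| ^ κ) ≤ ENNReal.ofReal (T ^ κ) := by
      have h2 : ∀ᵐ x ∂μB, x ≤ T := by
        rw [ae_iff]
        have hs : {x : ℝ | ¬ x ≤ T} = Set.Ioi T := by ext y; simp
        rw [hs]
        exact hμBIoi
      have h3 : ∀ᵐ x ∂μB, 0 < x := by
        rw [ae_iff]
        have hs : {x : ℝ | ¬ 0 < x} = Set.Iic 0 := by ext y; simp
        rw [hs]
        exact hμBneg
      filter_upwards [h2, h3] with y hy2 hy3
      apply ENNReal.ofReal_le_ofReal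
      apply Real.rpow_le_rpow (abs_nonneg _) _ hκ.le
      rw [abs_of_pos hy3]
      exact hy2
    calc (∫⁻ x, ENNReal.ofReal (|x| ^ κ) ∂μB)
        ≤ ∫⁻ _, ENNReal.ofReal (T ^ κ) ∂μB := lintegral_mono_ae hae
      _ = ENNReal.ofReal (T ^ κ) := by rw [lintegral_const, measure_univ, mul_one]
      _ < ⊤ := ENNReal.ofReal_lt_top
  -- independence
  have hindep : IndepFun (fun ω : (ℝ × ℝ) × ℝ => ((fun ω : (ℝ × ℝ) × ℝ => ω.1.1) ω,
      (fun ω : (ℝ × ℝ) × ℝ => ω.1.2) ω)) (fun ω : (ℝ × ℝ) × ℝ => ω.2) P := by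
    have he1 : (fun ω : (ℝ × ℝ) × ℝ => ((fun ω : (ℝ × ℝ) × ℝ => ω.1.1) ω,
        (fun ω : (ℝ × ℝ) × ℝ => ω.1.2) ω)) = (Prod.fst : (ℝ × ℝ) × ℝ → ℝ × ℝ) := rfl
    rw [he1, indepFun_iff_map_prod_eq_prod_map_map measurable_fst.aemeasurable
      measurable_snd.aemeasurable]
    have he2 : (fun ω : (ℝ × ℝ) × ℝ => (Prod.fst ω, (fun ω : (ℝ × ℝ) × ℝ => ω.2) ω))
        = id := rfl
    rw [he2, Measure.map_id, hmapfst, hmapX, hP_def]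
  -- the fixed-point equation in distribution
  have hYm : Measurable (fun ω : (ℝ × ℝ) × ℝ => max (ω.1.1 * ω.2) ω.1.2) :=
    (hAm.mul hXm).max hBm
  have hSt : ∀ t : ℝ, MeasurableSet {ω : (ℝ × ℝ) × ℝ | ω.1.1 * ω.2 ≤ t ∧ ω.1.2 ≤ t} := by
    intro t
    have hrw : {ω : (ℝ × ℝ) × ℝ | ω.1.1 * ω.2 ≤ t ∧ ω.1.2 ≤ t}
        = ((fun ω : (ℝ × ℝ) × ℝ => ω.1.1 * ω.2) ⁻¹' Set.Iic t)
          ∩ ((fun ω : (ℝ × ℝ) × ℝ => ω.1.2) ⁻¹' Set.Iic t) := rfl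
    rw [hrw]
    exact ((hAm.mul hXm) measurableSet_Iic).inter (hBm measurableSet_Iic)
  have hmapeq : Measure.map (fun ω : (ℝ × ℝ) × ℝ => ω.2) P
      = Measure.map (fun ω : (ℝ × ℝ) × ℝ => max (ω.1.1 * ω.2) ω.1.2) P := by
    haveI : IsProbabilityMeasure (Measure.map (fun ω : (ℝ × ℝ) × ℝ => ω.2) P) :=
      Measure.isProbabilityMeasure_map hXm.aemeasurable
    haveI : IsProbabilityMeasure
        (Measure.map (fun ω : (ℝ × ℝ) × ℝ => max (ω.1.1 * ω.2) ω.1.2) P) :=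
      Measure.isProbabilityMeasure_map hYm.aemeasurable
    refine Measure.ext_of_Iic _ _ (fun t => ?_)
    rw [hmapX, hμXIic, Measure.map_apply hYm measurableSet_Iic]
    have hpre2 : (fun ω : (ℝ × ℝ) × ℝ => max (ω.1.1 * ω.2) ω.1.2) ⁻¹' Set.Iic t
        = {ω : (ℝ × ℝ) × ℝ | ω.1.1 * ω.2 ≤ t ∧ ω.1.2 ≤ t} := by
      ext ω
      simp [max_le_iff]
    rw [hpre2, hP_def, Measure.prod_apply (hSt t)]
    have hmeasval : Measurable (fun z : ℝ × ℝ =>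
        μX (Prod.mk z ⁻¹' {ω : (ℝ × ℝ) × ℝ | ω.1.1 * ω.2 ≤ t ∧ ω.1.2 ≤ t})) :=
      measurable_measure_prodMk_left (hSt t)
    rw [lintegral_prod _ hmeasval.aemeasurable]
    rw [hμA_def, lintegral_add_measure, lintegral_smul_measure, lintegral_smul_measure,
      lintegral_dirac, lintegral_dirac]
    have hinner1 : (∫⁻ b, μX (Prod.mk (ea, b) ⁻¹'
        {ω : (ℝ × ℝ) × ℝ | ω.1.1 * ω.2 ≤ t ∧ ω.1.2 ≤ t}) ∂μB)
        = ENNReal.ofReal (G (t / ea)) * ENNReal.ofReal (H t) := by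
      have hfun : (fun b : ℝ => μX (Prod.mk (ea, b) ⁻¹'
          {ω : (ℝ × ℝ) × ℝ | ω.1.1 * ω.2 ≤ t ∧ ω.1.2 ≤ t}))
          = Set.indicator (Set.Iic t) (fun _ => μX (Set.Iic (t / ea))) := by
        funext b
        by_cases hb : b ≤ t
        · rw [Set.indicator_of_mem (Set.mem_Iic.2 hb)]
          congr 1
          ext y
          simp only [Set.mem_preimage, Set.mem_setOf_eq, Set.mem_Iic]
          constructor
          · rintro ⟨h1, -⟩
            rw [le_div_iff₀ hea0, mul_comm]
            exact h1
          · intro hy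
            refine ⟨?_, hb⟩
            rw [le_div_iff₀ hea0] at hy
            rw [mul_comm]
            exact hy
        · rw [Set.indicator_of_notMem (fun hmem => hb (Set.mem_Iic.1 hmem))]
          have he : Prod.mk (ea, b) ⁻¹'
              {ω : (ℝ × ℝ) × ℝ | ω.1.1 * ω.2 ≤ t ∧ ω.1.2 ≤ t} = ∅ := by
            ext y
            simp [hb]
          rw [he, measure_empty]
      rw [hfun, lintegral_indicator_const measurableSet_Iic, hμXIic, hμBIic]
    have hinner0 : (∫⁻ b, μX (Prod.mk ((0:ℝ), b) ⁻¹'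
        {ω : (ℝ × ℝ) × ℝ | ω.1.1 * ω.2 ≤ t ∧ ω.1.2 ≤ t}) ∂μB)
        = (if 0 ≤ t then (1:ENNReal) else 0) * ENNReal.ofReal (H t) := by
      have hfun : (fun b : ℝ => μX (Prod.mk ((0:ℝ), b) ⁻¹'
          {ω : (ℝ × ℝ) × ℝ | ω.1.1 * ω.2 ≤ t ∧ ω.1.2 ≤ t}))
          = Set.indicator (Set.Iic t) (fun _ => if 0 ≤ t then (1:ENNReal) else 0) := by
        funext b
        by_cases hb : b ≤ t
        · rw [Set.indicator_of_mem (Set.mem_Iic.2 hb)]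
          by_cases ht : 0 ≤ t
          · have he : Prod.mk ((0:ℝ), b) ⁻¹'
                {ω : (ℝ × ℝ) × ℝ | ω.1.1 * ω.2 ≤ t ∧ ω.1.2 ≤ t} = Set.univ := by
              ext y
              simp [hb, ht]
            rw [he, measure_univ, if_pos ht]
          · have he : Prod.mk ((0:ℝ), b) ⁻¹'
                {ω : (ℝ × ℝ) × ℝ | ω.1.1 * ω.2 ≤ t ∧ ω.1.2 ≤ t} = ∅ := by
              ext y
              simp [ht]
            rw [he, measure_empty, if_neg ht]
        · rw [Set.indicator_of_notMem (fun hmem => hb (Set.mem_Iic.1 hmem))]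
          have he : Prod.mk ((0:ℝ), b) ⁻¹'
              {ω : (ℝ × ℝ) × ℝ | ω.1.1 * ω.2 ≤ t ∧ ω.1.2 ≤ t} = ∅ := by
            ext y
            simp [hb]
          rw [he, measure_empty]
      rw [hfun, lintegral_indicator_const measurableSet_Iic, hμBIic]
    rw [hinner1, hinner0]
    have hifr : (if 0 ≤ t then (1:ENNReal) else 0)
        = ENNReal.ofReal (if 0 ≤ t then (1:ℝ) else 0) := by
      split <;> simp
    rw [hifr, smul_eq_mul, smul_eq_mul, ← ENNReal.ofReal_mul (hGnn _), ← ENNReal.ofReal_mul hp0.le,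
      ← ENNReal.ofReal_mul (by positivity : (0:ℝ) ≤ (if 0 ≤ t then (1:ℝ) else 0)),
      ← ENNReal.ofReal_mul h1p.le, ← ENNReal.ofReal_add (by positivity)
        (mul_nonneg h1p.le (mul_nonneg (by positivity) (hHnn t)))]
    exact congrArg ENNReal.ofReal (keyident t)
  -- tail probabilities
  have hPtail : ∀ c : ℝ, (P {ω : (ℝ × ℝ) × ℝ | ω.2 > c}).toReal = 1 - G c := by
    intro c
    have hset : {ω : (ℝ × ℝ) × ℝ | ω.2 > c}
        = (Set.univ : Set (ℝ × ℝ)) ×ˢ Set.Ioi c := by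
      ext ω
      simp [Set.mem_prod]
    rw [hset, hP_def, Measure.prod_prod, measure_univ, one_mul]
    have hIoi : μX (Set.Ioi c) = 1 - ENNReal.ofReal (G c) := by
      rw [← Set.compl_Iic, measure_compl measurableSet_Iic (measure_ne_top _ _),
        measure_univ, hμXIic]
    rw [hIoi, ← ENNReal.ofReal_one, ← ENNReal.ofReal_sub _ (hGnn c),
      ENNReal.toReal_ofReal (by linarith [hGle1 c])]
  -- the limit statement
  have htail : ∀ x : ℝ, 0 < x →
      Tendsto (fun n : ℕ => x ^ κ * Real.exp (κ * (n * h))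
        * (P {ω : (ℝ × ℝ) × ℝ | (fun ω : (ℝ × ℝ) × ℝ => ω.2) ω > x * Real.exp (n * h)}).toReal)
        atTop (𝓝 (q x)) := by
    intro x hx
    obtain ⟨N, hN⟩ : ∃ N : ℕ, p ^ N * f x ≤ 1 := by
      have hmc : Tendsto (fun n : ℕ => p ^ n * f x) atTop (𝓝 0) := by
        simpa using (tendsto_pow_atTop_nhds_zero_of_lt_one hp0.le hp1).mul_const (f x)
      exact ((hmc.eventually_lt_const one_pos).mono fun n hn => hn.le).exists
    refine Tendsto.congr' ?_ (tendsto_const_nhds (x := q x))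
    filter_upwards [eventually_ge_atTop N] with n hn
    have hxn : 0 < x * Real.exp ((n : ℝ) * h) := by positivity
    have hfn : f (x * Real.exp ((n : ℝ) * h)) ≤ 1 := by
      rw [hfscale x hx n]
      calc p ^ n * f x ≤ p ^ N * f x :=
            mul_le_mul_of_nonneg_right (pow_le_pow_of_le_one hp0.le hp1.le hn) (hfnn x hx)
        _ ≤ 1 := hN
    rw [hPtail, hGpos _ hxn, max_eq_right (by linarith), sub_sub_cancel,
      hfscale x hx n, hf_def]
    have hxκ : x ^ κ * x ^ (-κ) = 1 := by
      rw [← Real.rpow_add hx]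
      simp
    have hpκ : Real.exp (κ * ((n : ℝ) * h)) * p ^ n = 1 := by
      rw [hp_def, ← Real.exp_nat_mul, ← Real.exp_add,
        show κ * ((n : ℝ) * h) + (n : ℝ) * -(κ * h) = 0 by ring, Real.exp_zero]
    calc q x = (x ^ κ * x ^ (-κ)) * (Real.exp (κ * ((n : ℝ) * h)) * p ^ n) * q x := by
          rw [hxκ, hpκ]; ring
      _ = x ^ κ * Real.exp (κ * ((n : ℝ) * h)) * (p ^ n * (x ^ (-κ) * q x)) := by ring
  -- assemble
  refine ⟨(ℝ × ℝ) × ℝ, inferInstance, P, hPI,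
    (fun ω : (ℝ × ℝ) × ℝ => ω.1.1), (fun ω : (ℝ × ℝ) × ℝ => ω.1.2),
    (fun ω : (ℝ × ℝ) × ℝ => ω.2), hAm, hBm, hXm,
    ⟨hκ, hAae, hintA, hlintA, hspan⟩, hBmom, hindep, hmapeq, htail⟩
end
end

section
/- Let (A,B) be a random vector with joint distribution P(A = 0, B = 2^k) = 2^{−2k} for k = 1,2,..., and P(A = 2^ℓ, B = 0) = 2^{−(2ℓ+1)} for ℓ = 0,1,2,.... Let X be a random variable independent of (A,B) with the St. Petersburg distribution P(X = 2^k) = 2^{−k}, k = 1,2,.... Then AX + B has the same distribution as X, i.e. the St. Petersburg distribution solves the perpetuity equation X =_d AX + B for this (A,B). -/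
open MeasureTheory ProbabilityTheory Filter Topology

noncomputable section

open scoped ENNReal

private lemma enn_eq' {a b : ℝ≥0∞} (ha : a ≠ ⊤) (hb : b ≠ ⊤) (h : a.toReal = b.toReal) : a = b :=
  (ENNReal.toReal_eq_toReal_iff' ha hb).1 h

private lemma half_mul_two : ((1:ℝ≥0∞)/2) * 2 = 1 := by
  rw [one_div, ENNReal.inv_mul_cancel two_ne_zero ENNReal.ofNat_ne_top]

private lemma geomS (n : ℕ) :
    (∑ l ∈ Finset.range (n+1), ((1:ℝ≥0∞)/2)^l) + ((1:ℝ≥0∞)/2)^n = 2 := by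
  induction n with
  | zero =>
      simp only [Finset.range_one, Finset.sum_singleton, pow_zero]
      refine enn_eq' (by simp) (by simp) ?_
      rw [ENNReal.toReal_add (by simp) (by simp)]; simp; norm_num
  | succ n ih =>
      rw [Finset.sum_range_succ, add_assoc]
      have h2 : ((1:ℝ≥0∞)/2)^(n+1) + ((1:ℝ≥0∞)/2)^(n+1) = ((1:ℝ≥0∞)/2)^n := by
        rw [← two_mul, pow_succ, ← mul_assoc, mul_comm (2:ℝ≥0∞), mul_assoc,
          mul_comm (2:ℝ≥0∞) ((1:ℝ≥0∞)/2), half_mul_two, mul_one]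
      rw [h2]; exact ih

private lemma keyT (n : ℕ) :
    ((1:ℝ≥0∞)/2)^(2*n+2) + ((1:ℝ≥0∞)/2)^(n+2) * (∑ l ∈ Finset.range (n+1), ((1:ℝ≥0∞)/2)^l)
      = ((1:ℝ≥0∞)/2)^(n+1) := by
  have h := congrArg (fun x => ((1:ℝ≥0∞)/2)^(n+2) * x) (geomS n)
  simp only [mul_add, ← pow_add] at h
  have he : n + 2 + n = 2*n+2 := by ring
  rw [he, add_comm] at h
  rw [h, pow_succ _ (n+1), mul_assoc, half_mul_two, mul_one]

private lemma one_sub_half : (1:ℝ≥0∞) - 1/2 = 1/2 := by norm_num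

private lemma one_sub_quarter : (1:ℝ≥0∞) - 1/4 = 3/4 := by
  rw [ENNReal.sub_eq_of_eq_add (a := (1:ℝ≥0∞)) (b := 1/4) (c := 3/4) (by simp [ENNReal.div_eq_top])]
  refine enn_eq' (by simp) (by simp [ENNReal.div_eq_top, ENNReal.add_eq_top]) ?_
  rw [ENNReal.toReal_add (by simp [ENNReal.div_eq_top]) (by simp [ENNReal.div_eq_top])]
  simp [ENNReal.toReal_div]; norm_num

private lemma half_sq : ((1:ℝ≥0∞)/2)^2 = 1/4 := by
  refine enn_eq' (by simp) (by simp) ?_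
  simp [ENNReal.toReal_div]; norm_num

private lemma tsum_half_succ : ∑' k:ℕ, ((1:ℝ≥0∞)/2)^(k+1) = 1 := by
  simp_rw [pow_succ']
  rw [ENNReal.tsum_mul_left, ENNReal.tsum_geometric, one_sub_half]
  exact ENNReal.mul_inv_cancel (by norm_num) (by simp)

private lemma tsum_quarter_geom : ∑' k:ℕ, ((1:ℝ≥0∞)/4)^k = 4/3 := by
  rw [ENNReal.tsum_geometric, one_sub_quarter, ENNReal.inv_div (by norm_num) (by norm_num)]

private lemma tsum_even : ∑' k:ℕ, ((1:ℝ≥0∞)/2)^(2*k+2) = 1/3 := by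
  have : ∀ k:ℕ, ((1:ℝ≥0∞)/2)^(2*k+2) = (1/4) * ((1:ℝ≥0∞)/4)^k := by
    intro k
    rw [show 2*k+2 = 2*(k+1) by ring, pow_mul, half_sq, pow_succ, mul_comm]
  simp_rw [this]
  rw [ENNReal.tsum_mul_left, tsum_quarter_geom]
  refine enn_eq' (ENNReal.mul_ne_top (by simp) (by simp [ENNReal.div_eq_top])) (by simp) ?_
  rw [ENNReal.toReal_mul]
  simp [ENNReal.toReal_div]; norm_num

private lemma tsum_odd : ∑' l:ℕ, ((1:ℝ≥0∞)/2)^(2*l+1) = 2/3 := by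
  have : ∀ l:ℕ, ((1:ℝ≥0∞)/2)^(2*l+1) = (1/2) * ((1:ℝ≥0∞)/4)^l := by
    intro l
    rw [pow_succ, pow_mul, half_sq, mul_comm]
  simp_rw [this]
  rw [ENNReal.tsum_mul_left, tsum_quarter_geom]
  refine enn_eq' (ENNReal.mul_ne_top (by simp) (by simp [ENNReal.div_eq_top])) (by simp [ENNReal.div_eq_top]) ?_
  rw [ENNReal.toReal_mul]
  simp [ENNReal.toReal_div]; norm_num

private lemma third_add_two_third : (1:ℝ≥0∞)/3 + 2/3 = 1 := by
  refine enn_eq' (by simp [ENNReal.div_eq_top, ENNReal.add_eq_top]) (by simp) ?_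
  rw [ENNReal.toReal_add (by simp [ENNReal.div_eq_top]) (by simp [ENNReal.div_eq_top])]
  simp [ENNReal.toReal_div]; norm_num

open scoped Classical in
private lemma aux2 {Ω ι : Type*} [MeasurableSpace Ω] [Countable ι] (P : Measure Ω)
    (D : ι → Set Ω) (hD : ∀ i, MeasurableSet (D i))
    (hdisj : Pairwise (Function.onFun Disjoint D))
    (Y : Ω → ℝ) (v : ι → ℝ) (hval : ∀ i, ∀ ω ∈ D i, Y ω = v i) (s : Set ℝ) :
    P (Y ⁻¹' s ∩ ⋃ i, D i) = ∑' i, if v i ∈ s then P (D i) else 0 := by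
  classical
  have key : ∀ i, Y ⁻¹' s ∩ D i = if v i ∈ s then D i else ∅ := by
    intro i
    ext ω
    by_cases h : v i ∈ s <;> simp only [h, if_true, if_false, Set.mem_inter_iff,
      Set.mem_preimage, Set.mem_empty_iff_false, iff_false]
    · constructor
      · rintro ⟨_, h2⟩; exact h2
      · intro h2; exact ⟨by rw [hval i ω h2]; exact h, h2⟩
    · rintro ⟨h1, h2⟩; exact h (hval i ω h2 ▸ h1)
  rw [Set.inter_iUnion, measure_iUnion ?_ ?_]
  · exact tsum_congr fun i => by rw [key i]; split_ifs <;> simp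
  · intro i j hij
    exact ((hdisj hij).mono Set.inter_subset_right Set.inter_subset_right)
  · intro i; rw [key i]; split_ifs; exacts [hD i, MeasurableSet.empty]

/-- The St. Petersburg distribution (`P(X = 2^k) = 2^{-k}`, `k ≥ 1`) solves the
perpetuity equation `X =_d AX + B` with
`P(A = 0, B = 2^k) = 2^{-2k}` (`k ≥ 1`) and `P(A = 2^ℓ, B = 0) = 2^{-(2ℓ+1)}` (`ℓ ≥ 0`). -/
theorem stmt16 {Ω : Type*} [MeasurableSpace Ω] (P : Measure Ω) [IsProbabilityMeasure P]
    (A B X : Ω → ℝ) (hAmeas : Measurable A) (hBmeas : Measurable B) (hXmeas : Measurable X)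
    (hAB₁ : ∀ k : ℕ, 1 ≤ k →
      P {ω | A ω = 0 ∧ B ω = (2 : ℝ) ^ k} = (1 / 2 : ENNReal) ^ (2 * k))
    (hAB₂ : ∀ l : ℕ,
      P {ω | A ω = (2 : ℝ) ^ l ∧ B ω = 0} = (1 / 2 : ENNReal) ^ (2 * l + 1))
    (hX : ∀ k : ℕ, 1 ≤ k → P {ω | X ω = (2 : ℝ) ^ k} = (1 / 2 : ENNReal) ^ k)
    (hindep : IndepFun (fun ω => (A ω, B ω)) X P) :
    Measure.map (fun ω => A ω * X ω + B ω) P = Measure.map X P := by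
  classical
  set Y : Ω → ℝ := fun ω => A ω * X ω + B ω with hYdef
  have hYmeas : Measurable Y := (hAmeas.mul hXmeas).add hBmeas
  -- the events
  set E : ℕ → Set Ω := fun k => {ω | A ω = 0 ∧ B ω = (2:ℝ)^(k+1)} with hEdef
  set F : ℕ → Set Ω := fun l => {ω | A ω = (2:ℝ)^l ∧ B ω = 0} with hFdef
  set G : ℕ → Set Ω := fun j => {ω | X ω = (2:ℝ)^(j+1)} with hGdef
  set FG : ℕ × ℕ → Set Ω := fun p => F p.1 ∩ G p.2 with hFGdef
  have hpowinj : Function.Injective fun n : ℕ => (2:ℝ)^n :=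
    pow_right_injective₀ (by norm_num) (by norm_num)
  have hpowpos : ∀ n : ℕ, (0:ℝ) < 2^n := fun n => by positivity
  -- measurability
  have hEmeas : ∀ k, MeasurableSet (E k) := by
    intro k
    have : E k = A ⁻¹' {0} ∩ B ⁻¹' {(2:ℝ)^(k+1)} := by
      ext ω; simp [hEdef, Set.mem_preimage]
    rw [this]
    exact (hAmeas (measurableSet_singleton _)).inter (hBmeas (measurableSet_singleton _))
  have hFmeas : ∀ l, MeasurableSet (F l) := by
    intro l
    have : F l = A ⁻¹' {(2:ℝ)^l} ∩ B ⁻¹' {0} := by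
      ext ω; simp [hFdef, Set.mem_preimage]
    rw [this]
    exact (hAmeas (measurableSet_singleton _)).inter (hBmeas (measurableSet_singleton _))
  have hGmeas : ∀ j, MeasurableSet (G j) := by
    intro j
    have : G j = X ⁻¹' {(2:ℝ)^(j+1)} := by ext ω; simp [hGdef, Set.mem_preimage]
    rw [this]; exact hXmeas (measurableSet_singleton _)
  have hFGmeas : ∀ p, MeasurableSet (FG p) := fun p => (hFmeas p.1).inter (hGmeas p.2)
  -- disjointness
  have hpinj : ∀ {m n : ℕ}, (2:ℝ)^m = (2:ℝ)^n → m = n := fun h => hpowinj h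
  have hEdisj : Pairwise (Function.onFun Disjoint E) := by
    intro i j hij
    rw [Function.onFun, Set.disjoint_left]
    rintro ω ⟨_, hBi⟩ ⟨_, hBj⟩
    have : i + 1 = j + 1 := hpinj (hBi.symm.trans hBj)
    exact hij (by omega)
  have hGdisj : Pairwise (Function.onFun Disjoint G) := by
    intro i j hij
    rw [Function.onFun, Set.disjoint_left]
    intro ω hXi hXj
    have h1 : X ω = (2:ℝ)^(i+1) := hXi
    have h2 : X ω = (2:ℝ)^(j+1) := hXj
    have : i + 1 = j + 1 := hpinj (h1.symm.trans h2)
    exact hij (by omega)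
  have hFGdisj : Pairwise (Function.onFun Disjoint FG) := by
    rintro ⟨l, j⟩ ⟨l', j'⟩ hne
    rw [Function.onFun, Set.disjoint_left]
    rintro ω ⟨⟨hA1, _⟩, hG1⟩ ⟨⟨hA2, _⟩, hG2⟩
    have hl : l = l' := hpinj (hA1.symm.trans hA2)
    have h1 : X ω = (2:ℝ)^(j+1) := hG1
    have h2 : X ω = (2:ℝ)^(j'+1) := hG2
    have hj : j + 1 = j' + 1 := hpinj (h1.symm.trans h2)
    exact hne (by simp [hl]; omega)
  have hEFGdisj : Disjoint (⋃ k, E k) (⋃ p, FG p) := by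
    rw [Set.disjoint_left]
    intro ω hE hFG
    obtain ⟨k, hA0, _⟩ := Set.mem_iUnion.1 hE
    obtain ⟨p, ⟨hA2, _⟩, _⟩ := Set.mem_iUnion.1 hFG
    have : (0:ℝ) = 2 ^ p.1 := hA0.symm.trans hA2
    exact absurd this.symm (ne_of_gt (hpowpos p.1))
  -- values
  have hEval : ∀ k, ∀ ω ∈ E k, Y ω = (2:ℝ)^(k+1) := by
    rintro k ω ⟨hA0, hB⟩
    simp only [hYdef]
    rw [hA0, hB, zero_mul, zero_add]
  have hFGval : ∀ p : ℕ × ℕ, ∀ ω ∈ FG p, Y ω = (2:ℝ)^(p.1+p.2+1) := by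
    rintro ⟨l, j⟩ ω ⟨⟨hA, hB⟩, hG⟩
    have hXω : X ω = (2:ℝ)^(j+1) := hG
    simp only [hYdef]
    rw [hA, hB, hXω, add_zero, ← pow_add]
    congr 1
  have hGval : ∀ j, ∀ ω ∈ G j, X ω = (2:ℝ)^(j+1) := fun j ω h => h
  -- masses
  have hEmass : ∀ k, P (E k) = (1/2 : ℝ≥0∞)^(2*k+2) := by
    intro k
    have := hAB₁ (k+1) (by omega)
    rw [show 2*(k+1) = 2*k+2 by ring] at this
    exact this
  have hGmass : ∀ j, P (G j) = (1/2 : ℝ≥0∞)^(j+1) := fun j => hX (j+1) (by omega)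
  have hFGmass : ∀ p : ℕ × ℕ, P (FG p) = (1/2 : ℝ≥0∞)^(2*p.1+1) * (1/2 : ℝ≥0∞)^(p.2+1) := by
    rintro ⟨l, j⟩
    have hkey := hindep.measure_inter_preimage_eq_mul {((2:ℝ)^l, (0:ℝ))} {(2:ℝ)^(j+1)}
      (measurableSet_singleton _) (measurableSet_singleton _)
    have h1 : (fun ω => (A ω, B ω)) ⁻¹' {((2:ℝ)^l, (0:ℝ))} = F l := by
      ext ω; simp [hFdef, Prod.ext_iff]
    have h2 : X ⁻¹' {(2:ℝ)^(j+1)} = G j := by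
      ext ω; simp [hGdef]
    rw [h1, h2] at hkey
    rw [show FG (l, j) = F l ∩ G j from rfl, hkey, hAB₂ l, hGmass j]
  -- total masses of unions
  have hEUnion : P (⋃ k, E k) = 1/3 := by
    rw [measure_iUnion hEdisj hEmeas]
    simp_rw [hEmass]
    exact tsum_even
  have hFGUnion : P (⋃ p, FG p) = 2/3 := by
    rw [measure_iUnion hFGdisj hFGmeas]
    calc ∑' p : ℕ × ℕ, P (FG p)
        = ∑' (l : ℕ) (j : ℕ), P (FG (l, j)) := ENNReal.tsum_prod'
      _ = ∑' l : ℕ, (1/2 : ℝ≥0∞)^(2*l+1) * ∑' j : ℕ, (1/2 : ℝ≥0∞)^(j+1) := by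
          refine tsum_congr fun l => ?_
          simp_rw [hFGmass]
          exact ENNReal.tsum_mul_left
      _ = 2/3 := by rw [tsum_half_succ]; simp_rw [mul_one]; exact tsum_odd
  have hGUnion : P (⋃ j, G j) = 1 := by
    rw [measure_iUnion hGdisj hGmeas]
    simp_rw [hGmass]
    exact tsum_half_succ
  -- reduce both sides to sums over atoms
  refine Measure.ext fun s hs => ?_
  rw [Measure.map_apply hYmeas hs, Measure.map_apply hXmeas hs]
  have hreduce : ∀ (Z : Ω → ℝ), (U : Set Ω) → MeasurableSet U → P U = 1 →
      P (Z ⁻¹' s) = P (Z ⁻¹' s ∩ U) := by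
    intro Z U hU hU1
    have hcompl : P Uᶜ = 0 := by
      rw [measure_compl hU (measure_ne_top _ _), hU1, measure_univ, tsub_self]
    refine le_antisymm ?_ (measure_mono Set.inter_subset_left)
    calc P (Z ⁻¹' s) ≤ P ((Z ⁻¹' s ∩ U) ∪ Uᶜ) := measure_mono (fun ω hω => by
          by_cases h : ω ∈ U
          · exact Or.inl ⟨hω, h⟩
          · exact Or.inr h)
      _ ≤ P (Z ⁻¹' s ∩ U) + P Uᶜ := measure_union_le _ _
      _ = P (Z ⁻¹' s ∩ U) := by rw [hcompl, add_zero]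
  have hRHS : P (X ⁻¹' s) = ∑' j : ℕ, if (2:ℝ)^(j+1) ∈ s then (1/2:ℝ≥0∞)^(j+1) else 0 := by
    rw [hreduce X _ (MeasurableSet.iUnion hGmeas) hGUnion,
      aux2 P G hGmeas hGdisj X _ hGval s]
    refine tsum_congr fun j => ?_
    rw [hGmass j]
  have hUmeas : MeasurableSet ((⋃ k, E k) ∪ ⋃ p, FG p) :=
    (MeasurableSet.iUnion hEmeas).union (MeasurableSet.iUnion hFGmeas)
  have hU1 : P ((⋃ k, E k) ∪ ⋃ p, FG p) = 1 := by
    rw [measure_union hEFGdisj (MeasurableSet.iUnion hFGmeas), hEUnion, hFGUnion,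
      third_add_two_third]
  have hsplit : P (Y ⁻¹' s) =
      (∑' k : ℕ, if (2:ℝ)^(k+1) ∈ s then P (E k) else 0)
      + ∑' p : ℕ × ℕ, if (2:ℝ)^(p.1+p.2+1) ∈ s then P (FG p) else 0 := by
    rw [hreduce Y _ hUmeas hU1, Set.inter_union_distrib_left,
      measure_union (hEFGdisj.mono Set.inter_subset_right Set.inter_subset_right)
        ((hYmeas hs).inter (MeasurableSet.iUnion hFGmeas)),
      aux2 P E hEmeas hEdisj Y _ hEval s, aux2 P FG hFGmeas hFGdisj Y _ hFGval s]
  rw [hsplit, hRHS]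
  -- now a pure computation with sums
  set c : ℕ → Prop := fun m => (2:ℝ)^(m+1) ∈ s with hcdef
  have hmass1 : (∑' k : ℕ, if (2:ℝ)^(k+1) ∈ s then P (E k) else 0)
      = ∑' k : ℕ, if c k then (1/2:ℝ≥0∞)^(2*k+2) else 0 := by
    refine tsum_congr fun k => ?_
    rw [hEmass k]
  have hmass2 : (∑' p : ℕ × ℕ, if (2:ℝ)^(p.1+p.2+1) ∈ s then P (FG p) else 0)
      = ∑' p : ℕ × ℕ, if c (p.1+p.2) then (1/2:ℝ≥0∞)^(p.1+p.2+p.1+2) else 0 := by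
    refine tsum_congr fun p => ?_
    rw [hFGmass p, ← pow_add]
    congr 2
    omega
  rw [hmass1, hmass2]
  -- regroup the double sum along antidiagonals
  have hdouble : (∑' p : ℕ × ℕ, if c (p.1+p.2) then (1/2:ℝ≥0∞)^(p.1+p.2+p.1+2) else 0)
      = ∑' n : ℕ, if c n then
          (1/2:ℝ≥0∞)^(n+2) * ∑ l ∈ Finset.range (n+1), ((1:ℝ≥0∞)/2)^l else 0 := by
    set f : ℕ × ℕ → ℝ≥0∞ := fun p => if c (p.1+p.2) then (1/2:ℝ≥0∞)^(p.1+p.2+p.1+2) else 0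
      with hfdef
    calc (∑' p : ℕ × ℕ, f p)
        = ∑' x : Σ n : ℕ, (Finset.HasAntidiagonal.antidiagonal n : Finset (ℕ × ℕ)),
            f (Finset.HasAntidiagonal.sigmaAntidiagonalEquivProd x) :=
          (Finset.HasAntidiagonal.sigmaAntidiagonalEquivProd.tsum_eq f).symm
      _ = ∑' (n : ℕ), ∑' q : (Finset.HasAntidiagonal.antidiagonal n : Finset (ℕ × ℕ)), f q.1 :=
          ENNReal.tsum_sigma' _
      _ = ∑' n : ℕ, ∑ q ∈ Finset.HasAntidiagonal.antidiagonal n, f q :=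
          tsum_congr fun n => Finset.tsum_subtype _ f
      _ = ∑' n : ℕ, ∑ l ∈ Finset.range (n+1), f (l, n - l) :=
          tsum_congr fun n => Finset.Nat.sum_antidiagonal_eq_sum_range_succ_mk f n
      _ = ∑' n : ℕ, if c n then
            (1/2:ℝ≥0∞)^(n+2) * ∑ l ∈ Finset.range (n+1), ((1:ℝ≥0∞)/2)^l else 0 := by
          refine tsum_congr fun n => ?_
          have hterm : ∀ l ∈ Finset.range (n+1),
              f (l, n - l) = if c n then (1/2:ℝ≥0∞)^(n+2) * ((1:ℝ≥0∞)/2)^l else 0 := by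
            intro l hl
            have hl' : l ≤ n := by
              have := Finset.mem_range.1 hl
              omega
            have h1 : l + (n - l) = n := by omega
            simp only [hfdef, Prod.fst, Prod.snd]
            rw [show l + (n - l) = n from h1]
            rw [show n + l + 2 = n + 2 + l by omega, pow_add]
          rw [Finset.sum_congr rfl hterm]
          by_cases h : c n
          · simp only [h, if_true, ← Finset.mul_sum]
          · simp only [h, if_false, Finset.sum_const_zero]
  rw [hdouble, ← ENNReal.tsum_add]
  refine tsum_congr fun n => ?_
  simp only [hcdef]
  by_cases h : (2:ℝ)^(n+1) ∈ s
  · simp only [h, if_true]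
    exact keyT n
  · simp only [h, if_false, add_zero]
end
end

section
/- Let p ∈ (0, 1/2). Let Y, Y₁, Y₂, ... be iid random variables with P(Y = ℓ) = (1−p) p^ℓ for ℓ = 0,1,2,..., and let N be independent of (Y_i) with P(N = k) = (p/(1−p)) ((1−2p)/(1−p))^{k−1} for k = 1,2,.... Set S₀ = 0 and S_k = Y₁ + ⋯ + Y_k. Then P(S_{N−1} = 0) = 1/(2(1−p)) and P(S_{N−1} = k) = ((1−2p)/(2(1−p))) · 2^{−k} for every k ≥ 1. -/
open MeasureTheory ProbabilityTheory Filter Topology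

noncomputable section

/-- Hockey-stick identity in the form we need. -/
lemma aux_hockey (n k : ℕ) :
    ∑ a ∈ Finset.range (k + 1), ((a + n - 1).choose a) = (k + n).choose k := by
  cases n with
  | zero =>
    rw [Finset.sum_eq_single 0]
    · simp
    · intro a _ ha
      exact Nat.choose_eq_zero_of_lt (by omega)
    · simp
  | succ m =>
    have h1 : ∀ a, (a + (m + 1) - 1).choose a = (a + m).choose m := by
      intro a
      have : a + (m + 1) - 1 = a + m := by omega
      rw [this, Nat.choose_symm_add]
    simp only [h1]
    rw [Nat.sum_range_add_choose k m]
    have h2 : k + (m + 1) = (m + 1) + k := by omega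
    have h3 : k + m + 1 = (m + 1) + k := by omega
    rw [h2, h3, Nat.choose_symm_add]

/-- Distribution of the geometric random sum `S_{N-1} = Y₁ + ⋯ + Y_{N-1}`, where the `Y_i`
are iid with `P(Y = ℓ) = (1-p)p^ℓ` on `{0,1,2,...}` and `N` is independent of the `Y_i`
with `P(N = k) = (p/(1-p))((1-2p)/(1-p))^{k-1}` on `{1,2,...}`:
`P(S_{N-1} = 0) = 1/(2(1-p))` and `P(S_{N-1} = k) = ((1-2p)/(2(1-p))) 2^{-k}` for `k ≥ 1`. -/
theorem stmt18 {Ω : Type*} [MeasurableSpace Ω] (P : Measure Ω) [IsProbabilityMeasure P]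
    (p : ℝ) (hp : p ∈ Set.Ioo (0 : ℝ) (1 / 2))
    (Y : ℕ → Ω → ℕ) (hYmeas : ∀ i, Measurable (Y i))
    (N : Ω → ℕ) (hNmeas : Measurable N)
    (hYiid : iIndepFun Y P)
    (hYdist : ∀ i, ∀ l : ℕ, P {ω | Y i ω = l} = ENNReal.ofReal ((1 - p) * p ^ l))
    (hNdist : ∀ k : ℕ, 1 ≤ k →
      P {ω | N ω = k} = ENNReal.ofReal (p / (1 - p) * ((1 - 2 * p) / (1 - p)) ^ (k - 1)))
    (hNpos : P {ω | 1 ≤ N ω} = 1)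
    (hNindep : IndepFun N (fun ω => fun i => Y i ω) P) :
    P {ω | (∑ j ∈ Finset.Ico 1 (N ω), Y j ω) = 0} = ENNReal.ofReal (1 / (2 * (1 - p))) ∧
    ∀ k : ℕ, 1 ≤ k →
      P {ω | (∑ j ∈ Finset.Ico 1 (N ω), Y j ω) = k} =
        ENNReal.ofReal ((1 - 2 * p) / (2 * (1 - p)) * (1 / 2) ^ k) := by
  obtain ⟨hp0, hp2⟩ := hp
  have h1p : (0:ℝ) < 1 - p := by linarith
  have hr0 : (0:ℝ) < 1 - 2 * p := by linarith
  have hr1 : 1 - 2 * p < 1 := by linarith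
  have h1pne : (1:ℝ) - p ≠ 0 := ne_of_gt h1p
  have hpne : p ≠ 0 := ne_of_gt hp0
  -- measurability of partial sums
  have hSmeas : ∀ n : ℕ, Measurable (fun ω => ∑ j ∈ Finset.Ico 1 n, Y j ω) := fun n =>
    Finset.measurable_sum _ fun j _ => hYmeas j
  -- Step 1: negative binomial distribution of S_n
  have hS : ∀ n k : ℕ, P {ω | (∑ j ∈ Finset.Ico 1 (n + 1), Y j ω) = k} =
      ENNReal.ofReal (((k + n - 1).choose k : ℝ) * ((1 - p) ^ n * p ^ k)) := by
    intro n
    induction n with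
    | zero =>
      intro k
      simp only [Finset.Ico_self, Finset.sum_empty]
      cases k with
      | zero =>
        have : {ω : Ω | (0:ℕ) = 0} = Set.univ := by ext ω; simp
        rw [this, measure_univ]
        norm_num
      | succ k =>
        have h1 : {ω : Ω | (0:ℕ) = k + 1} = (∅ : Set Ω) := by ext ω; simp
        rw [h1, measure_empty]
        have h2 : (k + 1 + 0 - 1).choose (k + 1) = 0 :=
          Nat.choose_eq_zero_of_lt (by omega)
        rw [h2]
        simp
    | succ n ih =>
      intro k
      set A : Ω → ℕ := fun ω => ∑ j ∈ Finset.Ico 1 (n + 1), Y j ω with hA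
      have hindep : IndepFun A (Y (n + 1)) P := by
        have h := hYiid.indepFun_finsetSum_of_notMem hYmeas
          (s := Finset.Ico 1 (n + 1)) (i := n + 1) (by simp)
        have heq : (∑ j ∈ Finset.Ico 1 (n + 1), Y j) = A := by
          funext ω; simp [hA, Finset.sum_apply]
        rwa [heq] at h
      have hset : {ω | (∑ j ∈ Finset.Ico 1 (n + 1 + 1), Y j ω) = k} =
          ⋃ a ∈ Finset.range (k + 1), (A ⁻¹' {a} ∩ (Y (n + 1)) ⁻¹' {k - a}) := by
        ext ω
        have hsum : ∑ j ∈ Finset.Ico 1 (n + 1 + 1), Y j ω = A ω + Y (n + 1) ω :=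
          Finset.sum_Ico_succ_top (by omega) _
        simp only [Set.mem_setOf_eq, Set.mem_iUnion, Finset.mem_range, Set.mem_inter_iff,
          Set.mem_preimage, Set.mem_singleton_iff, hsum]
        constructor
        · intro h
          exact ⟨A ω, by omega, rfl, by omega⟩
        · rintro ⟨a, ha, rfl, h2⟩
          omega
      rw [hset, measure_biUnion_finset]
      · have hterm : ∀ a ∈ Finset.range (k + 1),
            P (A ⁻¹' {a} ∩ (Y (n + 1)) ⁻¹' {k - a}) =
            ENNReal.ofReal ((((a + n - 1).choose a : ℝ) * ((1 - p) ^ n * p ^ a)) *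
              ((1 - p) * p ^ (k - a))) := by
          intro a ha
          rw [hindep.measure_inter_preimage_eq_mul _ _ (measurableSet_singleton a)
            (measurableSet_singleton (k - a))]
          have e1 : A ⁻¹' {a} = {ω | (∑ j ∈ Finset.Ico 1 (n + 1), Y j ω) = a} := rfl
          have e2 : (Y (n + 1)) ⁻¹' {k - a} = {ω | Y (n + 1) ω = k - a} := rfl
          rw [e1, e2, ih a, hYdist (n + 1) (k - a), ← ENNReal.ofReal_mul (by positivity)]
        rw [Finset.sum_congr rfl hterm, ← ENNReal.ofReal_sum_of_nonneg (by
          intro a _; positivity)]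
        congr 1
        have hpow : ∀ a ∈ Finset.range (k + 1), 
            (((a + n - 1).choose a : ℝ) * ((1 - p) ^ n * p ^ a)) * ((1 - p) * p ^ (k - a)) =
            ((a + n - 1).choose a : ℝ) * ((1 - p) ^ (n + 1) * p ^ k) := by
          intro a ha
          simp only [Finset.mem_range] at ha
          have : p ^ a * p ^ (k - a) = p ^ k := by
            rw [← pow_add]; congr 1; omega
          rw [pow_succ]
          calc ((a + n - 1).choose a : ℝ) * ((1 - p) ^ n * p ^ a) * ((1 - p) * p ^ (k - a))
              = ((a + n - 1).choose a : ℝ) * ((1 - p) ^ n * (1 - p) * (p ^ a * p ^ (k - a))) := by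
                ring
            _ = _ := by rw [this]
        rw [Finset.sum_congr rfl hpow, ← Finset.sum_mul, ← Nat.cast_sum, aux_hockey n k]
        have : k + (n + 1) - 1 = k + n := by omega
        rw [this]
      · -- pairwise disjoint
        intro a _ b _ hab
        simp only [Function.onFun]
        apply Set.disjoint_left.mpr
        rintro ω ⟨h1, _⟩ ⟨h3, _⟩
        exact hab (h1.symm.trans h3)
      · intro a _
        exact ((hSmeas (n + 1)) (measurableSet_singleton a)).inter
          ((hYmeas (n + 1)) (measurableSet_singleton (k - a)))
  -- Step 2: decompose over values of N
  have hNindep' : ∀ n : ℕ, IndepFun N (fun ω => ∑ j ∈ Finset.Ico 1 n, Y j ω) P := by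
    intro n
    have hg : Measurable (fun f : ℕ → ℕ => ∑ j ∈ Finset.Ico 1 n, f j) :=
      Finset.measurable_sum _ fun j _ => measurable_pi_apply j
    exact hNindep.comp measurable_id hg
  have hN0 : P {ω | N ω = 0} = 0 := by
    have h1 : {ω | N ω = 0} = {ω | 1 ≤ N ω}ᶜ := by ext ω; simp
    have h2 : MeasurableSet {ω | 1 ≤ N ω} := by
      have : {ω | 1 ≤ N ω} = N ⁻¹' (Set.Ici 1) := rfl
      rw [this]; exact hNmeas measurableSet_Ici
    rw [h1, measure_compl h2 (measure_ne_top P _), hNpos, measure_univ]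
    simp
  have hP : ∀ k : ℕ, P {ω | (∑ j ∈ Finset.Ico 1 (N ω), Y j ω) = k} =
      ∑' m : ℕ, ENNReal.ofReal (p / (1 - p) * ((1 - 2 * p) / (1 - p)) ^ m) *
        ENNReal.ofReal (((k + m - 1).choose k : ℝ) * ((1 - p) ^ m * p ^ k)) := by
    intro k
    have hdecomp : {ω | (∑ j ∈ Finset.Ico 1 (N ω), Y j ω) = k} =
        ⋃ n : ℕ, ({ω | N ω = n} ∩ {ω | (∑ j ∈ Finset.Ico 1 n, Y j ω) = k}) := by
      ext ω
      simp only [Set.mem_setOf_eq, Set.mem_iUnion, Set.mem_inter_iff]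
      constructor
      · intro h; exact ⟨N ω, rfl, h⟩
      · rintro ⟨n, rfl, h2⟩; exact h2
    have hmeas : ∀ n : ℕ, MeasurableSet
        ({ω | N ω = n} ∩ {ω | (∑ j ∈ Finset.Ico 1 n, Y j ω) = k}) := fun n =>
      (hNmeas (measurableSet_singleton n)).inter ((hSmeas n) (measurableSet_singleton k))
    rw [hdecomp, measure_iUnion ?_ hmeas]
    · have hterm : ∀ n : ℕ,
          P ({ω | N ω = n + 1} ∩ {ω | (∑ j ∈ Finset.Ico 1 (n + 1), Y j ω) = k}) =
          ENNReal.ofReal (p / (1 - p) * ((1 - 2 * p) / (1 - p)) ^ n) *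
            ENNReal.ofReal (((k + n - 1).choose k : ℝ) * ((1 - p) ^ n * p ^ k)) := by
        intro n
        have := (hNindep' (n + 1)).measure_inter_preimage_eq_mul {n + 1} {k}
          (measurableSet_singleton _) (measurableSet_singleton _)
        have e1 : N ⁻¹' {n + 1} = {ω | N ω = n + 1} := rfl
        have e2 : (fun ω => ∑ j ∈ Finset.Ico 1 (n + 1), Y j ω) ⁻¹' {k} =
            {ω | (∑ j ∈ Finset.Ico 1 (n + 1), Y j ω) = k} := rfl
        rw [e1, e2] at this
        rw [this, hNdist (n + 1) (by omega), hS n k]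
        norm_num
      rw [tsum_eq_zero_add' ENNReal.summable]
      have hz : P ({ω | N ω = 0} ∩ {ω | (∑ j ∈ Finset.Ico 1 0, Y j ω) = k}) = 0 :=
        le_antisymm (le_trans (measure_mono Set.inter_subset_left) hN0.le) zero_le
      rw [hz, zero_add]
      exact tsum_congr hterm
    · intro a b hab
      simp only [Function.onFun]
      apply Set.disjoint_left.mpr
      rintro ω ⟨h1, _⟩ ⟨h3, _⟩
      exact hab (h1.symm.trans h3)
  -- Step 3: evaluate the series
  have hnonneg1 : ∀ m : ℕ, (0:ℝ) ≤ p / (1 - p) * ((1 - 2 * p) / (1 - p)) ^ m := by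
    intro m; positivity
  have hcollapse : ∀ m : ℕ, ((1 - 2 * p) / (1 - p)) ^ m * (1 - p) ^ m = (1 - 2 * p) ^ m := by
    intro m
    rw [div_pow, div_mul_cancel₀ _ (pow_ne_zero m h1pne)]
  have key : ∀ k : ℕ, HasSum
      (fun m : ℕ => (p / (1 - p) * ((1 - 2 * p) / (1 - p)) ^ m) *
        (((k + m - 1).choose k : ℝ) * ((1 - p) ^ m * p ^ k)))
      (if k = 0 then 1 / (2 * (1 - p)) else (1 - 2 * p) / (2 * (1 - p)) * (1 / 2) ^ k) := by
    intro k
    rcases Nat.eq_zero_or_pos k with hk | hk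
    · subst hk
      simp only [if_pos rfl]
      have hgeo := (hasSum_geometric_of_lt_one hr0.le hr1).mul_left (p / (1 - p))
      have heq : (fun m : ℕ => p / (1 - p) * (1 - 2 * p) ^ m) =
          fun m : ℕ => (p / (1 - p) * ((1 - 2 * p) / (1 - p)) ^ m) *
            (((0 + m - 1).choose 0 : ℝ) * ((1 - p) ^ m * p ^ 0)) := by
        funext m
        rw [Nat.choose_zero_right]
        push_cast
        rw [pow_zero]
        rw [show p / (1 - p) * ((1 - 2 * p) / (1 - p)) ^ m * (1 * ((1 - p) ^ m * 1)) =
          p / (1 - p) * (((1 - 2 * p) / (1 - p)) ^ m * (1 - p) ^ m) by ring, hcollapse]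
      have hval : p / (1 - p) * (1 - (1 - 2 * p))⁻¹ = 1 / (2 * (1 - p)) := by
        have : 1 - (1 - 2 * p) = 2 * p := by ring
        rw [this]
        field_simp
      rw [heq] at hgeo
      rwa [hval] at hgeo
    · have hkne : k ≠ 0 := by omega
      simp only [if_neg hkne]
      have hnorm : ‖(1 - 2 * p : ℝ)‖ < 1 := by
        rw [Real.norm_eq_abs, abs_lt]; constructor <;> linarith
      have h1 := hasSum_choose_mul_geometric_of_norm_lt_one k hnorm
      have h2 := h1.mul_left (1 - 2 * p)
      set u : ℕ → ℝ := fun m => ((k + m - 1).choose k : ℝ) * (1 - 2 * p) ^ m with hu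
      have h3 : (fun n : ℕ => (1 - 2 * p) * (((n + k).choose k : ℝ) * (1 - 2 * p) ^ n)) =
          fun n : ℕ => u (n + 1) := by
        funext n
        simp only [hu]
        have e1 : k + (n + 1) - 1 = n + k := by omega
        rw [e1, pow_succ]
        ring
      rw [h3] at h2
      have h4 := (hasSum_nat_add_iff (f := u) 1).mp h2
      have hu0 : ∑ i ∈ Finset.range 1, u i = 0 := by
        simp only [Finset.range_one, Finset.sum_singleton, hu]
        have : (k + 0 - 1).choose k = 0 := Nat.choose_eq_zero_of_lt (by omega)
        rw [this]
        simp
      rw [hu0, add_zero] at h4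
      have h5 := h4.mul_left (p / (1 - p) * p ^ k)
      have h6 : (fun m : ℕ => p / (1 - p) * p ^ k * u m) =
          fun m : ℕ => (p / (1 - p) * ((1 - 2 * p) / (1 - p)) ^ m) *
            (((k + m - 1).choose k : ℝ) * ((1 - p) ^ m * p ^ k)) := by
        funext m
        simp only [hu]
        rw [show (p / (1 - p) * ((1 - 2 * p) / (1 - p)) ^ m) *
            (((k + m - 1).choose k : ℝ) * ((1 - p) ^ m * p ^ k)) =
          p / (1 - p) * p ^ k * (((k + m - 1).choose k : ℝ) *
            (((1 - 2 * p) / (1 - p)) ^ m * (1 - p) ^ m)) by ring, hcollapse]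
      rw [h6] at h5
      have hval : p / (1 - p) * p ^ k * ((1 - 2 * p) * (1 / (1 - (1 - 2 * p)) ^ (k + 1))) =
          (1 - 2 * p) / (2 * (1 - p)) * (1 / 2) ^ k := by
        have e1 : 1 - (1 - 2 * p) = 2 * p := by ring
        rw [e1, mul_pow]
        have h2k : (2:ℝ) ^ (k + 1) ≠ 0 := by positivity
        have hpk : p ^ (k + 1) ≠ 0 := pow_ne_zero _ hpne
        field_simp
        have h12 : (1 / 2 : ℝ) ^ k * 2 ^ k = 1 := by rw [← mul_pow]; norm_num
        linear_combination (-(p * p ^ k * 2 - p ^ 2 * p ^ k * 4)) * h12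
      rwa [hval] at h5
  -- Finish
  have final : ∀ k : ℕ, P {ω | (∑ j ∈ Finset.Ico 1 (N ω), Y j ω) = k} =
      ENNReal.ofReal (if k = 0 then 1 / (2 * (1 - p))
        else (1 - 2 * p) / (2 * (1 - p)) * (1 / 2) ^ k) := by
    intro k
    rw [hP k]
    have hmul : ∀ m : ℕ,
        ENNReal.ofReal (p / (1 - p) * ((1 - 2 * p) / (1 - p)) ^ m) *
          ENNReal.ofReal (((k + m - 1).choose k : ℝ) * ((1 - p) ^ m * p ^ k)) =
        ENNReal.ofReal ((p / (1 - p) * ((1 - 2 * p) / (1 - p)) ^ m) *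
          (((k + m - 1).choose k : ℝ) * ((1 - p) ^ m * p ^ k))) := fun m =>
      (ENNReal.ofReal_mul (hnonneg1 m)).symm
    rw [tsum_congr hmul, ← ENNReal.ofReal_tsum_of_nonneg (fun m => by positivity)
      (key k).summable, (key k).tsum_eq]
  constructor
  · have := final 0
    simpa using this
  · intro k hk
    have := final k
    rw [if_neg (by omega)] at this
    exact this
end
end

section
/- Let ψ : ℝ → ℝ be Lebesgue integrable and h > 0, and define its exponential smoothing ψ̂(s) = ∫_{−∞}^s e^{−(s−x)} ψ(x) dx. Then for every x ∈ ℝ, Σ_{j∈ℤ} |ψ̂(x + jh)| ≤ (1 − e^{−h})^{−1} ∫_ℝ |ψ(y)| dy; in particular the sum is finite. -/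
open MeasureTheory ProbabilityTheory Filter Topology

noncomputable section

/-- The exponential smoothing `ψ̂(s) = ∫_{-∞}^s e^{-(s-x)} ψ(x) dx` of a function `ψ`. -/
def smoothing (ψ : ℝ → ℝ) (s : ℝ) : ℝ :=
  ∫ x in Set.Iic s, Real.exp (-(s - x)) * ψ x

lemma weight_sum_le (x y h : ℝ) (hh : 0 < h) (F : Finset ℤ) :
    ∑ j ∈ F, Set.indicator (Set.Iic (x + (j : ℝ) * h))
        (fun t => Real.exp (-(x + (j : ℝ) * h - t))) y ≤ (1 - Real.exp (-h))⁻¹ := by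
  set j₀ : ℤ := ⌈(y - x) / h⌉ with hj₀
  have hsum : Summable (fun k : ℕ => Real.exp (-h) ^ k) :=
    summable_geometric_of_lt_one (Real.exp_nonneg _) (Real.exp_lt_one_iff.2 (by linarith))
  have htsum : (∑' k : ℕ, Real.exp (-h) ^ k) = (1 - Real.exp (-h))⁻¹ :=
    tsum_geometric_of_lt_one (Real.exp_nonneg _) (Real.exp_lt_one_iff.2 (by linarith))
  set F' := F.filter (fun j : ℤ => y ≤ x + (j : ℝ) * h) with hF'
  have step1 : ∑ j ∈ F, Set.indicator (Set.Iic (x + (j : ℝ) * h))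
        (fun t => Real.exp (-(x + (j : ℝ) * h - t))) y
      = ∑ j ∈ F', Real.exp (-(x + (j : ℝ) * h - y)) := by
    rw [hF', Finset.sum_filter]
    refine Finset.sum_congr rfl fun j _ => ?_
    by_cases hj : y ≤ x + (j : ℝ) * h
    · rw [Set.indicator_of_mem (Set.mem_Iic.2 hj), if_pos hj]
    · rw [Set.indicator_of_notMem (by simpa using hj), if_neg hj]
  have hmem : ∀ j ∈ F', j₀ ≤ j := by
    intro j hj
    rw [hF', Finset.mem_filter] at hj
    exact Int.ceil_le.2 (by rw [div_le_iff₀ hh]; push_cast; linarith [hj.2])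
  have step2 : ∑ j ∈ F', Real.exp (-(x + (j : ℝ) * h - y))
      ≤ ∑ j ∈ F', Real.exp (-h) ^ (j - j₀).toNat := by
    refine Finset.sum_le_sum fun j hj => ?_
    have h1 : j₀ ≤ j := hmem j hj
    have h2 : y - x ≤ (j₀ : ℝ) * h := by
      rw [← div_le_iff₀ hh] at *
      exact Int.le_ceil _
    rw [← Real.exp_nat_mul]
    apply Real.exp_le_exp.2
    have h3 : ((j - j₀).toNat : ℤ) = j - j₀ := Int.toNat_of_nonneg (by omega)
    have : ((j - j₀).toNat : ℝ) = (j : ℝ) - (j₀ : ℝ) := by exact_mod_cast h3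
    rw [this]
    nlinarith
  have step3 : ∑ j ∈ F', Real.exp (-h) ^ (j - j₀).toNat
      ≤ ∑' k : ℕ, Real.exp (-h) ^ k := by
    have hinj : Set.InjOn (fun j : ℤ => (j - j₀).toNat) F' := by
      intro a ha b hb hab
      have := hmem a ha; have := hmem b hb
      simp only at hab
      omega
    rw [← Finset.sum_image hinj]
    exact Summable.sum_le_tsum _ (fun k _ => pow_nonneg (Real.exp_nonneg _) _) hsum
  rw [step1, ← htsum]
  exact step2.trans step3

/-- For integrable `ψ` and `h > 0`, the lattice sums of `|ψ̂|` are finite: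
`Σ_{j∈ℤ} |ψ̂(x + jh)| ≤ (1 - e^{-h})⁻¹ ∫_ℝ |ψ(y)| dy` for every `x ∈ ℝ`. -/
theorem stmt19 (ψ : ℝ → ℝ) (hψ : Integrable ψ) (h : ℝ) (hh : 0 < h) :
    ∀ x : ℝ, Summable (fun j : ℤ => |smoothing ψ (x + j * h)|) ∧
      (∑' j : ℤ, |smoothing ψ (x + j * h)|) ≤
        (1 - Real.exp (-h))⁻¹ * ∫ y, |ψ y| := by
  intro x
  set C : ℝ := (1 - Real.exp (-h))⁻¹ with hC
  set G : ℤ → ℝ → ℝ := fun j y =>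
    Set.indicator (Set.Iic (x + (j : ℝ) * h))
      (fun t => Real.exp (-(x + (j : ℝ) * h - t)) * |ψ t|) y with hG
  have hGle : ∀ j y, ‖G j y‖ ≤ ‖|ψ y|‖ := by
    intro j y
    simp only [hG]
    by_cases hy : y ∈ Set.Iic (x + (j : ℝ) * h)
    · rw [Set.indicator_of_mem hy]
      rw [Real.norm_eq_abs, Real.norm_eq_abs, abs_abs, abs_mul, abs_abs,
        abs_of_pos (Real.exp_pos _)]
      have : Real.exp (-(x + (j : ℝ) * h - y)) ≤ 1 :=
        Real.exp_le_one_iff.2 (by simp only [Set.mem_Iic] at hy; linarith)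
      nlinarith [abs_nonneg (ψ y)]
    · rw [Set.indicator_of_notMem hy]
      simp [abs_nonneg]
  have hGint : ∀ j, Integrable (G j) := by
    intro j
    refine Integrable.mono hψ.abs ?_ (Filter.Eventually.of_forall (hGle j))
    exact (((Real.continuous_exp.comp (by continuity)).aestronglyMeasurable).mul
      hψ.aestronglyMeasurable.norm).indicator measurableSet_Iic
  have hbound : ∀ j : ℤ, |smoothing ψ (x + (j : ℝ) * h)| ≤ ∫ y, G j y := by
    intro j
    simp only [hG]
    calc |smoothing ψ (x + (j : ℝ) * h)|
        ≤ ∫ y in Set.Iic (x + (j : ℝ) * h),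
            ‖Real.exp (-(x + (j : ℝ) * h - y)) * ψ y‖ := by
          rw [smoothing, ← Real.norm_eq_abs]
          exact norm_integral_le_integral_norm _
      _ = ∫ y in Set.Iic (x + (j : ℝ) * h),
            Real.exp (-(x + (j : ℝ) * h - y)) * |ψ y| := by
          refine integral_congr_ae (Filter.Eventually.of_forall fun y => ?_)
          simp only [Real.norm_eq_abs, abs_mul, abs_of_pos (Real.exp_pos _)]
      _ = ∫ y, G j y := (integral_indicator measurableSet_Iic).symm
  have key : ∀ F : Finset ℤ, ∑ j ∈ F, |smoothing ψ (x + (j : ℝ) * h)| ≤ C * ∫ y, |ψ y| := by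
    intro F
    calc ∑ j ∈ F, |smoothing ψ (x + (j : ℝ) * h)|
        ≤ ∑ j ∈ F, ∫ y, G j y := Finset.sum_le_sum fun j _ => hbound j
      _ = ∫ y, ∑ j ∈ F, G j y := (integral_finset_sum F fun j _ => hGint j).symm
      _ ≤ ∫ y, C * |ψ y| := by
          refine integral_mono (integrable_finset_sum F fun j _ => hGint j)
            (hψ.abs.const_mul C) fun y => ?_
          have : ∑ j ∈ F, G j y = (∑ j ∈ F, Set.indicator (Set.Iic (x + (j : ℝ) * h))
              (fun t => Real.exp (-(x + (j : ℝ) * h - t))) y) * |ψ y| := by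
            rw [Finset.sum_mul]
            refine Finset.sum_congr rfl fun j _ => ?_
            simp only [hG]
            by_cases hy : y ∈ Set.Iic (x + (j : ℝ) * h)
            · rw [Set.indicator_of_mem hy, Set.indicator_of_mem hy]
            · rw [Set.indicator_of_notMem hy, Set.indicator_of_notMem hy, zero_mul]
          rw [this]
          exact mul_le_mul_of_nonneg_right (weight_sum_le x y h hh F) (abs_nonneg _)
      _ = C * ∫ y, |ψ y| := integral_const_mul C _
  have hnn : (0 : ℤ → ℝ) ≤ fun j : ℤ => |smoothing ψ (x + (j : ℝ) * h)| :=
    fun j => abs_nonneg _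
  have hs : Summable (fun j : ℤ => |smoothing ψ (x + (j : ℝ) * h)|) :=
    summable_of_sum_le hnn key
  exact ⟨hs, Summable.tsum_le_of_sum_le hs key⟩
end
end
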